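/- arXiv:2111.07761 — 4 statements merged into one kernel-verified Lean document; each statement's English description precedes it below -/
import Mathlib

section
/- Let A and B be finite sets with |A| = |B| = n, and let c: (A ∪ B) × (A ∪ B) → ℝ be a cost function induced by a tree T with non-negative edge weights w and a map ρ: A ∪ B → V(T), i.e. c(a,b) equals the weighted length of the unique path between ρ(a) and ρ(b) in T. Then the minimal cost over all bijections f: A → B of Σ_{a∈A} c(a, f(a)) equals Σ_{uv ∈ E(T)} |A_{uv} − B_{uv}| · w(uv), where for each edge uv of T (with a fixed orientation), S_{uv} denotes the number of elements of S mapped by ρ into the connected component of T − uv containing u. -/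
open scoped Classical

/-- The weighted path distance between two nodes of a tree: the sum of the weights of the
edges on the unique path connecting them. -/
noncomputable def treeDist {V : Type*} (T : SimpleGraph V) (hT : T.IsTree) (w : Sym2 V → ℝ)
    (u v : V) : ℝ :=
  (((hT.existsUnique_path u v).exists.choose).edges.map w).sum

/-- `sideOf T hT u v x` holds iff `x` lies in the connected component of `T − uv`
containing `u`, i.e. the unique path from `x` to `v` passes through `u`. -/
noncomputable def sideOf {V : Type*} (T : SimpleGraph V) (hT : T.IsTree) (u v x : V) : Prop :=
  u ∈ ((hT.existsUnique_path x v).exists.choose).support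

/-!
The unique path between two nodes of the tree uses exactly the edges separating them, so the cost
of an assignment is the sum over the edges `uv` of `w(uv)` times the number of pairs `(a, f a)`
separated by `uv`. The pairs crossing `uv` have net flow `A_{uv} − B_{uv}`, so there are at least
`|A_{uv} − B_{uv}|` of them. A cost-minimal assignment attains this bound on every edge: if two
pairs crossed an edge `xy` in opposite directions, splitting their paths at `xy` and applying the
triangle inequality shows that exchanging their targets saves at least `2 w(xy)`.
-/

theorem Finset.abs_sum_eq_sum_abs_of_nonneg_or_nonpos {ι G : Type*} [AddCommGroup G]
    [LinearOrder G] [IsOrderedAddMonoid G] {s : Finset ι} {f : ι → G}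
    (h : (∀ i ∈ s, 0 ≤ f i) ∨ ∀ i ∈ s, f i ≤ 0) : |∑ i ∈ s, f i| = ∑ i ∈ s, |f i| := by
  rcases h with h | h
  · rw [abs_sum_of_nonneg h]
    exact Finset.sum_congr rfl fun i hi ↦ (abs_of_nonneg (h i hi)).symm
  · rw [← abs_neg, ← Finset.sum_neg_distrib, abs_sum_of_nonneg fun i hi ↦ neg_nonneg.mpr (h i hi)]
    exact Finset.sum_congr rfl fun i hi ↦ (abs_of_nonpos (h i hi)).symm

theorem Equiv.add_le_add_of_forall_sum_le {α β G : Type*} [Fintype α] [DecidableEq α]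
    [AddCommGroup G] [LinearOrder G] [IsOrderedAddMonoid G] (c : α → β → G) {f : α ≃ β}
    (hf : ∀ g : α ≃ β, ∑ a, c a (f a) ≤ ∑ a, c a (g a)) (i j : α) :
    c i (f i) + c j (f j) ≤ c i (f j) + c j (f i) := by
  rcases eq_or_ne i j with rfl | hij
  · rfl
  have hswap := sub_nonneg.mpr (hf ((Equiv.swap i j).trans f))
  rw [← Finset.sum_sub_distrib, Fintype.sum_eq_add i j hij fun a ha ↦ by
    simp [Equiv.swap_apply_of_ne_of_ne ha.1 ha.2]] at hswap
  simp only [Equiv.trans_apply, Equiv.swap_apply_left, Equiv.swap_apply_right] at hswap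
  rw [← sub_nonneg]
  convert hswap using 1
  abel

namespace SimpleGraph

variable {V : Type*} {G : SimpleGraph V} {e : Sym2 V} {u v x y z : V}

theorem Walk.reachable_deleteEdges_of_mem_support (p : G.Walk u v) (he : e ∉ p.edges)
    (hz : z ∈ p.support) : (G.deleteEdges {e}).Reachable z v :=
  ((p.dropUntil z hz).toDeleteEdge e
    fun h ↦ he (p.edges_dropUntil_subset_edges hz h)).reachable

theorem IsBridge.mem_edges_iff_of_isPath (hb : G.IsBridge s(x, y)) {p : G.Walk u v}
    (hp : p.IsPath) :
    s(x, y) ∈ p.edges ↔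
      ¬((G.deleteEdges {s(x, y)}).Reachable u x ↔ (G.deleteEdges {s(x, y)}).Reachable v x) := by
  refine ⟨fun he ↦ ?_, fun h ↦ by_contra fun he ↦ h ?_⟩
  · have hyx : ¬(G.deleteEdges {s(x, y)}).Reachable y x := fun h ↦ hb h.symm
    induction p with
    | nil => simp at he
    | @cons a b c hab q ih =>
      have hnodup := hp.isTrail.edges_nodup
      rw [Walk.edges_cons, List.nodup_cons] at hnodup
      rw [Walk.edges_cons, List.mem_cons] at he
      rcases he with he | he
      · have hbc := q.reachable_deleteEdges_of_mem_support (he ▸ hnodup.1) q.start_mem_support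
        rcases Sym2.eq_iff.mp he with ⟨rfl, rfl⟩ | ⟨rfl, rfl⟩
        · exact fun h ↦ hyx (hbc.trans (h.mp .rfl))
        · exact fun h ↦ hyx (h.mpr (hbc.symm.trans .rfl))
      · have hab' : (G.deleteEdges {s(x, y)}).Adj a b :=
          deleteEdges_adj.mpr ⟨hab, fun h ↦ hnodup.1 (Set.mem_singleton_iff.mp h ▸ he)⟩
        exact fun h ↦ ih hp.of_cons he ⟨fun hbx ↦ h.mp (hab'.reachable.trans hbx),
          fun hc ↦ hab'.symm.reachable.trans (h.mpr hc)⟩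
  · have huv := (p.toDeleteEdge _ he).reachable
    exact ⟨huv.symm.trans, huv.trans⟩

theorem IsTree.isBridge (hG : G.IsTree) (hxy : G.Adj x y) : G.IsBridge s(x, y) :=
  isAcyclic_iff_forall_adj_isBridge.mp hG.isAcyclic hxy

def IsOrientation (G : SimpleGraph V) (D : Finset (V × V)) : Prop :=
  (∀ p ∈ D, G.Adj p.1 p.2) ∧
    ∀ u v, G.Adj u v → ((u, v) ∈ D ∧ (v, u) ∉ D) ∨ ((v, u) ∈ D ∧ (u, v) ∉ D)

variable {D : Finset (V × V)}

theorem IsOrientation.injOn (hD : G.IsOrientation D) :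
    Set.InjOn (fun p : V × V ↦ s(p.1, p.2)) D := by
  rintro ⟨a, b⟩ hp ⟨c, d⟩ hq h
  rcases Sym2.eq_iff.mp h with ⟨rfl, rfl⟩ | ⟨rfl, rfl⟩
  · rfl
  · rcases hD.2 a b (hD.1 _ hp) with ⟨-, h⟩ | ⟨-, h⟩
    · exact absurd hq h
    · exact absurd hp h

theorem IsOrientation.sum_ite_mem {M : Type*} [AddCommMonoid M] (hD : G.IsOrientation D)
    {E : Finset (Sym2 V)} (hE : ↑E ⊆ G.edgeSet) (g : Sym2 V → M) :
    ∑ p ∈ D, (if s(p.1, p.2) ∈ E then g s(p.1, p.2) else 0) = ∑ e ∈ E, g e := by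
  rw [← Finset.sum_filter, ← Finset.sum_image fun p hp q hq ↦
    hD.injOn (Finset.mem_filter.mp hp).1 (Finset.mem_filter.mp hq).1]
  congr 1
  ext e
  induction e with
  | h a b =>
    simp only [Finset.mem_image, Finset.mem_filter, Prod.exists]
    refine ⟨fun ⟨_, _, ⟨_, hcd⟩, he⟩ ↦ he ▸ hcd, fun he ↦ ?_⟩
    rcases hD.2 a b (hE he) with ⟨hab, -⟩ | ⟨hba, -⟩
    · exact ⟨a, b, ⟨hab, he⟩, rfl⟩
    · exact ⟨b, a, ⟨hba, Sym2.eq_swap ▸ he⟩, Sym2.eq_swap⟩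

end SimpleGraph

section TreeDist

open SimpleGraph

variable {V : Type*} {T : SimpleGraph V} (hT : T.IsTree) (w : Sym2 V → ℝ) {u v x y : V}

theorem treeDist_eq_of_isPath {p : T.Walk u v} (hp : p.IsPath) :
    treeDist T hT w u v = (p.edges.map w).sum := by
  rw [treeDist, (hT.existsUnique_path u v).unique (hT.existsUnique_path u v).exists.choose_spec hp]

theorem treeDist_comm (u v : V) : treeDist T hT w u v = treeDist T hT w v u := by
  obtain ⟨p, hp, -⟩ := hT.existsUnique_path v u
  rw [treeDist_eq_of_isPath hT w hp.reverse, treeDist_eq_of_isPath hT w hp, Walk.edges_reverse,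
    List.map_reverse, List.sum_reverse]

theorem sideOf_iff_reachable (hxy : T.Adj x y) (z : V) :
    sideOf T hT x y z ↔ (T.deleteEdges {s(x, y)}).Reachable z x := by
  have hb := hT.isBridge hxy
  have hyx : ¬(T.deleteEdges {s(x, y)}).Reachable y x := fun h ↦ hb h.symm
  set P := (hT.existsUnique_path z y).exists.choose
  have hx : x ∈ P.support ↔ s(x, y) ∈ P.edges :=
    ⟨fun hx ↦ by_contra fun he ↦ hb (P.reachable_deleteEdges_of_mem_support he hx),
      P.fst_mem_support_of_mem_edges⟩
  rw [sideOf, hx, hb.mem_edges_iff_of_isPath (hT.existsUnique_path z y).exists.choose_spec]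
  tauto

noncomputable def sideIndicator (T : SimpleGraph V) (hT : T.IsTree) (p : V × V) (z : V) : ℝ :=
  if sideOf T hT p.1 p.2 z then 1 else 0

theorem sideIndicator_sub_pos_iff (p : V × V) :
    0 < sideIndicator T hT p u - sideIndicator T hT p v ↔
      sideOf T hT p.1 p.2 u ∧ ¬sideOf T hT p.1 p.2 v := by
  unfold sideIndicator
  split_ifs <;> norm_num [*]

variable {D : Finset (V × V)}

theorem treeDist_eq_sum_cut (hD : T.IsOrientation D) (u v : V) :
    treeDist T hT w u v =
      ∑ p ∈ D, |sideIndicator T hT p u - sideIndicator T hT p v| * w s(p.1, p.2) := by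
  obtain ⟨P, hP, -⟩ := hT.existsUnique_path u v
  rw [treeDist_eq_of_isPath hT w hP, ← List.sum_toFinset _ hP.isTrail.edges_nodup,
    ← hD.sum_ite_mem (fun e he ↦ P.edges_subset_edgeSet (List.mem_toFinset.mp he))]
  refine Finset.sum_congr rfl fun p hp ↦ ?_
  have hadj := hD.1 p hp
  have hcross : s(p.1, p.2) ∈ P.edges ↔ ¬(sideOf T hT p.1 p.2 u ↔ sideOf T hT p.1 p.2 v) := by
    rw [(hT.isBridge hadj).mem_edges_iff_of_isPath hP, sideOf_iff_reachable hT hadj,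
      sideOf_iff_reachable hT hadj]
  simp only [List.mem_toFinset, hcross, sideIndicator]
  split_ifs <;> simp_all

theorem treeDist_triangle (hw : ∀ e, 0 ≤ w e) (hD : T.IsOrientation D) (u z v : V) :
    treeDist T hT w u v ≤ treeDist T hT w u z + treeDist T hT w z v := by
  simp only [treeDist_eq_sum_cut hT w hD, ← Finset.sum_add_distrib, ← add_mul]
  refine Finset.sum_le_sum fun p _ ↦ mul_le_mul_of_nonneg_right ?_ (hw _)
  exact abs_sub_le _ _ _

theorem treeDist_eq_add_of_sideOf (hxy : T.Adj x y) (hu : sideOf T hT x y u)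
    (hv : ¬sideOf T hT x y v) :
    treeDist T hT w u v = treeDist T hT w u x + w s(x, y) + treeDist T hT w y v := by
  rw [sideOf_iff_reachable hT hxy] at hu hv
  have hb := hT.isBridge hxy
  obtain ⟨p, hp, -⟩ := hT.existsUnique_path u x
  obtain ⟨q, hq, -⟩ := hT.existsUnique_path y v
  have hpe : s(x, y) ∉ p.edges := by
    rw [hb.mem_edges_iff_of_isPath hp, not_not]
    exact iff_of_true hu .rfl
  have hqe : s(x, y) ∉ q.edges := by
    rw [hb.mem_edges_iff_of_isPath hq, not_not]
    exact iff_of_false (fun h ↦ hb h.symm) hv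
  have hpq : (p.append (.cons hxy q)).IsPath := by
    rw [Walk.isPath_def, Walk.support_append, Walk.support_cons, List.tail_cons]
    refine hp.support_nodup.append hq.support_nodup fun z hzp hzq ↦ hv ?_
    exact (q.reachable_deleteEdges_of_mem_support hqe hzq).symm.trans
      (p.reachable_deleteEdges_of_mem_support hpe hzp)
  rw [treeDist_eq_of_isPath hT w hpq, treeDist_eq_of_isPath hT w hp,
    treeDist_eq_of_isPath hT w hq, Walk.edges_append, Walk.edges_cons]
  simp only [List.map_append, List.map_cons, List.sum_append, List.sum_cons]
  ring

theorem treeDist_add_treeDist_add_two_mul_le (hw : ∀ e, 0 ≤ w e) (hD : T.IsOrientation D)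
    (hxy : T.Adj x y) {u' v' : V} (hu : sideOf T hT x y u) (hv : ¬sideOf T hT x y v)
    (hu' : ¬sideOf T hT x y u') (hv' : sideOf T hT x y v') :
    treeDist T hT w u v' + treeDist T hT w u' v + 2 * w s(x, y) ≤
      treeDist T hT w u v + treeDist T hT w u' v' := by
  have huv := treeDist_eq_add_of_sideOf hT w hxy hu hv
  have hv'u' := treeDist_eq_add_of_sideOf hT w hxy hv' hu'
  have huv' := treeDist_triangle hT w hw hD u x v'
  have hu'v := treeDist_triangle hT w hw hD u' y v
  rw [treeDist_comm hT w v' u'] at hv'u'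
  rw [treeDist_comm hT w x v'] at huv'
  rw [treeDist_comm hT w u' y] at hu'v
  linarith

end TreeDist

section Assignment

open SimpleGraph

variable {V X : Type*} {T : SimpleGraph V} (hT : T.IsTree) (w : Sym2 V → ℝ) (ρ : X → V)
  {A B : Finset X} {D : Finset (V × V)}

theorem sum_sideIndicator_eq_card (S : Finset X) (p : V × V) :
    ∑ a : S, sideIndicator T hT p (ρ a) = (S.filter fun a ↦ sideOf T hT p.1 p.2 (ρ a)).card := by
  rw [Finset.sum_coe_sort S fun a ↦ sideIndicator T hT p (ρ a)]
  simp [sideIndicator, Finset.sum_boole]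

theorem sum_sideIndicator_sub_eq_card_sub_card (f : A ≃ B) (p : V × V) :
    ∑ a : A, (sideIndicator T hT p (ρ a) - sideIndicator T hT p (ρ (f a))) =
      ((A.filter fun a ↦ sideOf T hT p.1 p.2 (ρ a)).card : ℝ) -
        (B.filter fun b ↦ sideOf T hT p.1 p.2 (ρ b)).card := by
  rw [Finset.sum_sub_distrib, Equiv.sum_comp f fun b ↦ sideIndicator T hT p (ρ b),
    sum_sideIndicator_eq_card, sum_sideIndicator_eq_card]

theorem sum_treeDist_eq_sum_cut (hD : T.IsOrientation D) (f : A ≃ B) :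
    ∑ a : A, treeDist T hT w (ρ a) (ρ (f a)) =
      ∑ p ∈ D, (∑ a : A, |sideIndicator T hT p (ρ a) - sideIndicator T hT p (ρ (f a))|) *
        w s(p.1, p.2) := by
  simp only [treeDist_eq_sum_cut hT w hD, Finset.sum_mul]
  exact Finset.sum_comm

/-- An optimal assignment crosses no edge of positive weight in both directions. -/
theorem abs_sum_sideIndicator_sub_mul_eq_of_forall_le (hw : ∀ e, 0 ≤ w e)
    (hD : T.IsOrientation D) {f : A ≃ B}
    (hf : ∀ g : A ≃ B, ∑ a : A, treeDist T hT w (ρ a) (ρ (f a)) ≤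
      ∑ a : A, treeDist T hT w (ρ a) (ρ (g a))) {p : V × V} (hp : p ∈ D) :
    |∑ a : A, (sideIndicator T hT p (ρ a) - sideIndicator T hT p (ρ (f a)))| * w s(p.1, p.2) =
      (∑ a : A, |sideIndicator T hT p (ρ a) - sideIndicator T hT p (ρ (f a))|) * w s(p.1, p.2) := by
  rcases (hw s(p.1, p.2)).eq_or_lt with hw0 | hpos
  · simp [← hw0]
  congr 1
  refine Finset.abs_sum_eq_sum_abs_of_nonneg_or_nonpos ?_
  by_contra! h
  obtain ⟨⟨a, -, ha⟩, ⟨b, -, hb⟩⟩ := h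
  rw [← neg_pos, neg_sub, sideIndicator_sub_pos_iff] at ha
  rw [sideIndicator_sub_pos_iff] at hb
  have hgain := treeDist_add_treeDist_add_two_mul_le hT w hw hD (hD.1 p hp) hb.1 hb.2 ha.2 ha.1
  have hopt :=
    Equiv.add_le_add_of_forall_sum_le (fun (a : A) (b : B) ↦ treeDist T hT w (ρ a) (ρ b)) hf b a
  linarith

end Assignment

theorem optimal_assignment_eq_tree_edge_sum_general
    {X V : Type}
    (T : SimpleGraph V) (hT : T.IsTree) (w : Sym2 V → ℝ) (hw : ∀ e, 0 ≤ w e)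
    (ρ : X → V) (A B : Finset X) (hcard : A.card = B.card)
    (D : Finset (V × V))
    (hD : ∀ p ∈ D, T.Adj p.1 p.2)
    (hDorient : ∀ u v : V, T.Adj u v →
      ((u, v) ∈ D ∧ (v, u) ∉ D) ∨ ((v, u) ∈ D ∧ (u, v) ∉ D)) :
    IsLeast {r : ℝ | ∃ f : {x // x ∈ A} ≃ {y // y ∈ B},
        r = ∑ a : {x // x ∈ A}, treeDist T hT w (ρ a.1) (ρ (f a).1)}
      (∑ p ∈ D,
        |((A.filter fun a => sideOf T hT p.1 p.2 (ρ a)).card : ℝ)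
          - ((B.filter fun b => sideOf T hT p.1 p.2 (ρ b)).card : ℝ)| * w s(p.1, p.2)) := by
  have hDT : T.IsOrientation D := ⟨hD, hDorient⟩
  constructor
  · have : Nonempty (A ≃ B) := ⟨Fintype.equivOfCardEq (by simpa using hcard)⟩
    obtain ⟨f, hf⟩ := Finite.exists_min fun f : A ≃ B ↦ ∑ a : A, treeDist T hT w (ρ a) (ρ (f a))
    refine ⟨f, ?_⟩
    rw [sum_treeDist_eq_sum_cut hT w ρ hDT]
    refine Finset.sum_congr rfl fun p hp ↦ ?_
    rw [← sum_sideIndicator_sub_eq_card_sub_card hT ρ f]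
    exact abs_sum_sideIndicator_sub_mul_eq_of_forall_le hT w ρ hw hDT hf hp
  · rintro _ ⟨f, rfl⟩
    rw [sum_treeDist_eq_sum_cut hT w ρ hDT]
    refine Finset.sum_le_sum fun p _ ↦ mul_le_mul_of_nonneg_right ?_ (hw _)
    rw [← sum_sideIndicator_sub_eq_card_sub_card hT ρ f]
    exact Finset.abs_sum_le_sum_abs _ _

/-- For finite sets `A`, `B` of equal cardinality and ground costs given by a
tree metric (tree `T`, non-negative weights `w`, map `ρ` into the nodes of `T`), the minimal
cost over all bijections `f : A → B` of `∑ c(a, f a)` equals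
`∑_{uv ∈ E(T)} |A_{uv} − B_{uv}| ⬝ w(uv)`, where the sum ranges over a fixed orientation `D`
of the edges of `T` and `S_{uv}` counts the elements of `S` mapped into the component of
`T − uv` containing `u`. -/
theorem optimal_assignment_eq_tree_edge_sum
    {X V : Type} [Fintype V]
    (T : SimpleGraph V) (hT : T.IsTree) (w : Sym2 V → ℝ) (hw : ∀ e, 0 ≤ w e)
    (ρ : X → V) (A B : Finset X) (hcard : A.card = B.card)
    (D : Finset (V × V))
    (hD : ∀ p ∈ D, T.Adj p.1 p.2)
    (hDorient : ∀ u v : V, T.Adj u v →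
      ((u, v) ∈ D ∧ (v, u) ∉ D) ∨ ((v, u) ∈ D ∧ (u, v) ∉ D)) :
    IsLeast {r : ℝ | ∃ f : {x // x ∈ A} ≃ {y // y ∈ B},
        r = ∑ a : {x // x ∈ A}, treeDist T hT w (ρ a.1) (ρ (f a).1)}
      (∑ p ∈ D,
        |((A.filter fun a => sideOf T hT p.1 p.2 (ρ a)).card : ℝ)
          - ((B.filter fun b => sideOf T hT p.1 p.2 (ρ b)).card : ℝ)| * w s(p.1, p.2)) :=
  optimal_assignment_eq_tree_edge_sum_general T hT w hw ρ A B hcard D hD hDorient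
end

section
/- Under the same hypotheses (tree-metric ground costs), the optimal assignment cost between A and B equals the Manhattan (ℓ1) distance between the vectors Φ(A) and Φ(B), where Φ(S) is the vector indexed by the edges uv of T with entries S_{uv} · w(uv). -/
/-!
Every oriented edge `uv` of the tree cuts it in two, and the tree distance between two vertices
is the total weight of the edges whose cut separates them. Hence under any bijection `A ≃ B`
at least `|A_{uv} - B_{uv}|` matched pairs are separated by `uv`, which gives the lower bound.
For a bijection of least cost this bound is attained at every edge of positive weight:
otherwise two pairs are separated by `uv` in opposite directions, and since the cuts of two
tree edges never cross, exchanging their partners separates fewer pairs at `uv` and no more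
at any other edge.
-/

open scoped Classical

/-- The embedding vector of a set `S` (given via `ρ`) indexed by the oriented edges of the
tree: the entry for edge `uv` is `S_{uv} ⬝ w(uv)`. -/
noncomputable def phi {X V : Type} (T : SimpleGraph V) (hT : T.IsTree) (w : Sym2 V → ℝ)
    (ρ : X → V) (S : Finset X) (p : V × V) : ℝ :=
  ((S.filter fun a => sideOf T hT p.1 p.2 (ρ a)).card : ℝ) * w s(p.1, p.2)

theorem Finset.exists_pos_and_exists_neg_of_abs_sum_lt {ι G : Type*} [AddCommGroup G]
    [LinearOrder G] [IsOrderedAddMonoid G] {s : Finset ι} {f : ι → G}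
    (h : |∑ i ∈ s, f i| < ∑ i ∈ s, |f i|) : (∃ i ∈ s, 0 < f i) ∧ ∃ i ∈ s, f i < 0 := by
  constructor <;> by_contra! hf <;> refine h.ne ?_
  · rw [abs_of_nonpos (sum_nonpos hf), ← sum_neg_distrib]
    exact sum_congr rfl fun i hi => (abs_of_nonpos (hf i hi)).symm
  · rw [abs_sum_of_nonneg hf]
    exact sum_congr rfl fun i hi => (abs_of_nonneg (hf i hi)).symm

theorem Fintype.sum_swap_apply_add {α M : Type*} [Fintype α] [DecidableEq α] [AddCommMonoid M]
    (G : α → α → M) {x₁ x₂ : α} (h : x₁ ≠ x₂) :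
    ∑ x, G x (Equiv.swap x₁ x₂ x) + (G x₁ x₁ + G x₂ x₂) = ∑ x, G x x + (G x₁ x₂ + G x₂ x₁) := by
  have hpair := Finset.subset_univ ({x₁, x₂} : Finset α)
  rw [← Finset.sum_sdiff hpair, ← Finset.sum_sdiff hpair (f := fun x => G x x),
    Finset.sum_pair h, Finset.sum_pair h, Equiv.swap_apply_left, Equiv.swap_apply_right,
    Finset.sum_congr rfl fun x hx => ?_]
  · abel
  · simp only [Finset.mem_sdiff, Finset.mem_insert, Finset.mem_singleton, not_or] at hx
    rw [Equiv.swap_apply_of_ne_of_ne hx.2.1 hx.2.2]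

theorem abs_ite_sub_ite (P Q : Prop) [Decidable P] [Decidable Q] :
    |(if P then (1 : ℝ) else 0) - if Q then 1 else 0| = if ¬(P ↔ Q) then 1 else 0 := by
  by_cases hP : P <;> by_cases hQ : Q <;> simp [hP, hQ]

theorem ite_lt_ite_iff (P Q : Prop) [Decidable P] [Decidable Q] :
    ((if P then 1 else 0 : ℝ) < if Q then 1 else 0) ↔ ¬P ∧ Q := by
  by_cases hP : P <;> by_cases hQ : Q <;> simp [hP, hQ]

def Crosses {V : Type*} (P Q : V → Prop) : Prop :=
  (∃ x, P x ∧ Q x) ∧ (∃ x, P x ∧ ¬Q x) ∧ (∃ x, ¬P x ∧ Q x) ∧ ∃ x, ¬P x ∧ ¬Q x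

noncomputable def cutDist {ι V : Type*} (D : Finset ι) (w : ι → ℝ) (S : ι → V → Prop)
    (x y : V) : ℝ :=
  ∑ i ∈ D with ¬(S i x ↔ S i y), w i

theorem ite_exchange_le {V : Type*} {P Q : V → Prop} (hPQ : ¬Crosses P Q) {m₁ n₁ m₂ n₂ : V}
    (h₁ : P m₁) (h₂ : ¬P n₁) (h₃ : ¬P m₂) (h₄ : P n₂) {c : ℝ} (hc : 0 ≤ c) :
    ((if ¬(Q m₁ ↔ Q n₂) then c else 0) + if ¬(Q m₂ ↔ Q n₁) then c else 0) ≤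
      (if ¬(Q m₁ ↔ Q n₁) then c else 0) + if ¬(Q m₂ ↔ Q n₂) then c else 0 := by
  by_cases q₁ : Q m₁ <;> by_cases q₂ : Q n₁ <;> by_cases q₃ : Q m₂ <;> by_cases q₄ : Q n₂ <;>
    simp [q₁, q₂, q₃, q₄, hc]
  · exact (hPQ ⟨⟨m₁, h₁, q₁⟩, ⟨n₂, h₄, q₄⟩, ⟨n₁, h₂, q₂⟩, m₂, h₃, q₃⟩).elim
  · exact (hPQ ⟨⟨n₂, h₄, q₄⟩, ⟨m₁, h₁, q₁⟩, ⟨m₂, h₃, q₃⟩, n₁, h₂, q₂⟩).elim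

section CutMetric

variable {ι V α β : Type*} {D : Finset ι} {w : ι → ℝ} {S : ι → V → Prop}

theorem cutDist_exchange_lt (hw : ∀ i ∈ D, 0 ≤ w i) {p : ι} (hp : p ∈ D) (hwp : 0 < w p)
    (hS : ∀ i ∈ D, ¬Crosses (S p) (S i)) {m₁ n₁ m₂ n₂ : V}
    (h₁ : S p m₁) (h₂ : ¬S p n₁) (h₃ : ¬S p m₂) (h₄ : S p n₂) :
    cutDist D w S m₁ n₂ + cutDist D w S m₂ n₁ < cutDist D w S m₁ n₁ + cutDist D w S m₂ n₂ := by
  simp only [cutDist, Finset.sum_filter, ← Finset.sum_add_distrib]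
  refine Finset.sum_lt_sum (fun i hi => ite_exchange_le (hS i hi) h₁ h₂ h₃ h₄ (hw i hi))
    ⟨p, hp, ?_⟩
  simp [h₁, h₂, h₃, h₄, hwp]

theorem sum_cutDist_eq [Fintype α] (a b : α → V) :
    ∑ x, cutDist D w S (a x) (b x) =
      ∑ i ∈ D, w i * ∑ x, |(if S i (a x) then (1 : ℝ) else 0) - if S i (b x) then 1 else 0| := by
  simp only [cutDist, Finset.sum_filter, abs_ite_sub_ite, Finset.mul_sum, mul_ite, mul_one,
    mul_zero]
  exact Finset.sum_comm

theorem sum_abs_sub_le_sum_cutDist [Fintype α] [Fintype β] (hw : ∀ i ∈ D, 0 ≤ w i)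
    (a : α → V) (b : β → V) (f : α ≃ β) :
    ∑ i ∈ D, w i * |∑ x, (if S i (a x) then (1 : ℝ) else 0) - ∑ y, if S i (b y) then 1 else 0| ≤
      ∑ x, cutDist D w S (a x) (b (f x)) := by
  rw [sum_cutDist_eq]
  refine Finset.sum_le_sum fun i hi => mul_le_mul_of_nonneg_left ?_ (hw i hi)
  rw [← Equiv.sum_comp f, ← Finset.sum_sub_distrib]
  exact Finset.abs_sum_le_sum_abs _ _

theorem sum_cutDist_le_of_forall_le [Fintype α] [Fintype β] (hw : ∀ i ∈ D, 0 ≤ w i)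
    (hS : ∀ i ∈ D, ∀ j ∈ D, ¬Crosses (S i) (S j)) (a : α → V) (b : β → V) (f : α ≃ β)
    (hf : ∀ g : α ≃ β,
      ∑ x, cutDist D w S (a x) (b (f x)) ≤ ∑ x, cutDist D w S (a x) (b (g x))) :
    ∑ x, cutDist D w S (a x) (b (f x)) ≤
      ∑ i ∈ D, w i *
        |∑ x, (if S i (a x) then (1 : ℝ) else 0) - ∑ y, if S i (b y) then 1 else 0| := by
  by_contra! hlt
  simp only [sum_cutDist_eq, ← Equiv.sum_comp f, ← Finset.sum_sub_distrib] at hlt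
  obtain ⟨p, hp, hltp⟩ := Finset.exists_lt_of_sum_lt hlt
  have hwp : 0 < w p := (hw p hp).lt_of_ne fun h => by simp [← h] at hltp
  obtain ⟨⟨x₁, -, hx₁⟩, ⟨x₂, -, hx₂⟩⟩ :=
    Finset.exists_pos_and_exists_neg_of_abs_sum_lt (lt_of_mul_lt_mul_left hltp hwp.le)
  obtain ⟨h₂, h₁⟩ := (ite_lt_ite_iff _ _).1 (sub_pos.1 hx₁)
  obtain ⟨h₃, h₄⟩ := (ite_lt_ite_iff _ _).1 (sub_neg.1 hx₂)
  have hx : x₁ ≠ x₂ := by rintro rfl; exact h₃ h₁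
  -- exchanging the partners of `x₁` and `x₂` strictly decreases the cost
  have hswap := Fintype.sum_swap_apply_add (fun x y => cutDist D w S (a x) (b (f y))) hx
  have hlt := cutDist_exchange_lt hw hp hwp (hS p hp) h₁ h₂ h₃ h₄
  have hmin := hf ((Equiv.swap x₁ x₂).trans f)
  simp only [Equiv.trans_apply] at hmin
  linarith

theorem isLeast_sum_cutDist [Fintype α] [Fintype β] (hcard : Fintype.card α = Fintype.card β)
    (hw : ∀ i ∈ D, 0 ≤ w i) (hS : ∀ i ∈ D, ∀ j ∈ D, ¬Crosses (S i) (S j))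
    (a : α → V) (b : β → V) :
    IsLeast {r : ℝ | ∃ f : α ≃ β, r = ∑ x, cutDist D w S (a x) (b (f x))}
      (∑ i ∈ D, w i *
        |∑ x, (if S i (a x) then (1 : ℝ) else 0) - ∑ y, if S i (b y) then 1 else 0|) := by
  have : Nonempty (α ≃ β) := ⟨Fintype.equivOfCardEq hcard⟩
  obtain ⟨f, hf⟩ := Finite.exists_min fun f : α ≃ β => ∑ x, cutDist D w S (a x) (b (f x))
  refine ⟨⟨f, le_antisymm (sum_abs_sub_le_sum_cutDist hw a b f) ?_⟩, ?_⟩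
  · exact sum_cutDist_le_of_forall_le hw hS a b f hf
  · rintro _ ⟨g, rfl⟩
    exact sum_abs_sub_le_sum_cutDist hw a b g

end CutMetric

theorem SimpleGraph.sum_eq_sum_orientation {V M : Type*} [AddCommMonoid M] {G : SimpleGraph V}
    {D : Finset (V × V)} (hD : ∀ p ∈ D, G.Adj p.1 p.2)
    (hDorient : ∀ u v : V, G.Adj u v → ((u, v) ∈ D ∧ (v, u) ∉ D) ∨ ((v, u) ∈ D ∧ (u, v) ∉ D))
    (w : Sym2 V → M) {E : Finset (Sym2 V)} (hE : ∀ e ∈ E, e ∈ G.edgeSet) :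
    ∑ p ∈ D with s(p.1, p.2) ∈ E, w s(p.1, p.2) = ∑ e ∈ E, w e := by
  refine Finset.sum_bij (fun p _ => s(p.1, p.2)) (fun p hp => (Finset.mem_filter.1 hp).2)
    ?_ ?_ fun _ _ => rfl
  · rintro ⟨p₁, p₂⟩ hp ⟨q₁, q₂⟩ hq h
    simp only [Finset.mem_filter] at hp hq
    rcases Sym2.eq_iff.1 h with ⟨rfl, rfl⟩ | ⟨rfl, rfl⟩
    · rfl
    · rcases hDorient _ _ (hD _ hp.1) with ⟨-, hn⟩ | ⟨-, hn⟩
      · exact absurd hq.1 hn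
      · exact absurd hp.1 hn
  · intro e he
    induction e using Sym2.inductionOn with
    | hf u v =>
      rcases hDorient u v (hE _ he) with ⟨huv, -⟩ | ⟨hvu, -⟩
      · exact ⟨(u, v), Finset.mem_filter.2 ⟨huv, he⟩, rfl⟩
      · exact ⟨(v, u), Finset.mem_filter.2 ⟨hvu, Sym2.eq_swap ▸ he⟩, Sym2.eq_swap⟩

namespace SimpleGraph.IsTree

variable {V : Type*} {T : SimpleGraph V} (hT : T.IsTree)

noncomputable def path (x y : V) : T.Walk x y :=
  (hT.existsUnique_path x y).exists.choose

theorem isPath_path (x y : V) : (hT.path x y).IsPath :=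
  (hT.existsUnique_path x y).exists.choose_spec

theorem eq_path {x y : V} {q : T.Walk x y} (hq : q.IsPath) : q = hT.path x y :=
  (hT.existsUnique_path x y).unique hq (hT.isPath_path x y)

theorem treeDist_eq_sum (w : Sym2 V → ℝ) (x y : V) :
    treeDist T hT w x y = ((hT.path x y).edges.map w).sum := rfl

theorem sideOf_iff {u v x : V} : sideOf T hT u v x ↔ u ∈ (hT.path x v).support := Iff.rfl

theorem sideOf_self (u v : V) : sideOf T hT u v u :=
  (hT.path u v).start_mem_support

theorem sideOf_right_iff {u v : V} : sideOf T hT u v v ↔ u = v := by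
  rw [sideOf_iff, ← hT.eq_path Walk.IsPath.nil]
  simp

theorem edge_mem_edges_of_sideOf {u v x : V} (huv : T.Adj u v) (h : sideOf T hT u v x) :
    s(u, v) ∈ (hT.path x v).edges := by
  have hdrop : (hT.path x v).dropUntil u h = Walk.cons huv Walk.nil :=
    (hT.eq_path ((hT.isPath_path x v).dropUntil h)).trans
      (hT.eq_path (Path.singleton huv).2).symm
  rw [← (hT.path x v).take_spec h, Walk.edges_append, hdrop]
  simp

theorem sideOf_of_adj {u v x x' : V} (huv : T.Adj u v) (hxx' : T.Adj x x')
    (hne : s(x, x') ≠ s(u, v)) (hx : sideOf T hT u v x) : sideOf T hT u v x' := by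
  by_contra hx'
  by_cases hmem : x ∈ (hT.path x' v).support
  · have hdrop : (hT.path x' v).dropUntil x hmem = hT.path x v :=
      hT.eq_path ((hT.isPath_path x' v).dropUntil hmem)
    exact hx' ((hT.path x' v).support_dropUntil_subset_support hmem (hdrop ▸ hx))
  · have hcons : hT.path x v = Walk.cons hxx' (hT.path x' v) :=
      (hT.eq_path ((hT.isPath_path x' v).cons hmem)).symm
    have hedge := hT.edge_mem_edges_of_sideOf huv hx
    rw [hcons, Walk.edges_cons, List.mem_cons] at hedge
    rcases hedge with h | h
    · exact hne h.symm
    · exact hx' ((hT.path x' v).fst_mem_support_of_mem_edges h)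

theorem not_sideOf_iff_of_adj {u v x x' : V} (huv : T.Adj u v) (hxx' : T.Adj x x') :
    ¬(sideOf T hT u v x ↔ sideOf T hT u v x') ↔ s(x, x') = s(u, v) := by
  refine ⟨fun h => by_contra fun hne => h ⟨hT.sideOf_of_adj huv hxx' hne,
    hT.sideOf_of_adj huv hxx'.symm (by rwa [Sym2.eq_swap])⟩, fun h => ?_⟩
  rcases Sym2.eq_iff.1 h with ⟨rfl, rfl⟩ | ⟨rfl, rfl⟩
  · exact fun hiff => huv.ne (hT.sideOf_right_iff.1 (hiff.1 (hT.sideOf_self _ _)))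
  · exact fun hiff => huv.ne (hT.sideOf_right_iff.1 (hiff.2 (hT.sideOf_self _ _)))

theorem edge_mem_edges_iff {u v x y : V} (huv : T.Adj u v) {q : T.Walk x y} (hq : q.IsPath) :
    s(u, v) ∈ q.edges ↔ ¬(sideOf T hT u v x ↔ sideOf T hT u v y) := by
  induction q with
  | nil => simp
  | @cons a b c hab q ih =>
    have ih := ih hq.of_cons
    have hstep := hT.not_sideOf_iff_of_adj huv hab
    have hnotin : s(a, b) ∉ q.edges := (List.nodup_cons.1 hq.edges_nodup).1
    have hexcl : ¬(¬(sideOf T hT u v a ↔ sideOf T hT u v b) ∧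
        ¬(sideOf T hT u v b ↔ sideOf T hT u v c)) :=
      fun ⟨h₁, h₂⟩ => hnotin (hstep.1 h₁ ▸ ih.2 h₂)
    rw [Walk.edges_cons, List.mem_cons, ih, eq_comm, ← hstep]
    tauto

theorem sideOf_iff_sideOf_of_separates {u v s t x y : V} (huv : T.Adj u v) (hst : T.Adj s t)
    (hsep : ¬(sideOf T hT s t x ↔ sideOf T hT s t y))
    (hnsep : sideOf T hT u v x ↔ sideOf T hT u v y) :
    sideOf T hT u v x ↔ sideOf T hT u v s := by
  have hq := hT.isPath_path x y
  have hs : s ∈ (hT.path x y).support :=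
    (hT.path x y).fst_mem_support_of_mem_edges ((hT.edge_mem_edges_iff hst hq).2 hsep)
  by_contra h
  exact (hT.edge_mem_edges_iff huv hq).1 ((hT.path x y).edges_takeUntil_subset_edges hs
    ((hT.edge_mem_edges_iff huv (hq.takeUntil hs)).2 h)) hnsep

theorem not_crosses_sideOf {u v s t : V} (huv : T.Adj u v) (hst : T.Adj s t) :
    ¬Crosses (sideOf T hT u v) (sideOf T hT s t) := by
  rintro ⟨⟨x₁, p₁, q₁⟩, ⟨x₂, p₂, q₂⟩, ⟨x₃, p₃, q₃⟩, x₄, p₄, q₄⟩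
  have h₁₂ := hT.sideOf_iff_sideOf_of_separates huv hst (by tauto) (iff_of_true p₁ p₂)
  have h₃₄ := hT.sideOf_iff_sideOf_of_separates huv hst (by tauto) (iff_of_false p₃ p₄)
  exact p₃ (h₃₄.2 (h₁₂.1 p₁))

theorem treeDist_eq_cutDist {D : Finset (V × V)} (hD : ∀ p ∈ D, T.Adj p.1 p.2)
    (hDorient : ∀ u v : V, T.Adj u v → ((u, v) ∈ D ∧ (v, u) ∉ D) ∨ ((v, u) ∈ D ∧ (u, v) ∉ D))
    (w : Sym2 V → ℝ) (x y : V) :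
    treeDist T hT w x y =
      cutDist D (fun p => w s(p.1, p.2)) (fun p => sideOf T hT p.1 p.2) x y := by
  have hq := hT.isPath_path x y
  rw [treeDist_eq_sum, ← List.sum_toFinset _ hq.edges_nodup, ← sum_eq_sum_orientation hD hDorient w
    fun e he => (hT.path x y).edges_subset_edgeSet (List.mem_toFinset.1 he), cutDist]
  refine Finset.sum_congr (Finset.filter_congr fun p hp => ?_) fun _ _ => rfl
  rw [List.mem_toFinset, hT.edge_mem_edges_iff (hD p hp) hq]

end SimpleGraph.IsTree

theorem phi_eq_sum_mul {X V : Type} (T : SimpleGraph V) (hT : T.IsTree) (w : Sym2 V → ℝ)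
    (ρ : X → V) (S : Finset X) (p : V × V) :
    phi T hT w ρ S p =
      (∑ x : S, if sideOf T hT p.1 p.2 (ρ x) then (1 : ℝ) else 0) * w s(p.1, p.2) := by
  rw [phi, Finset.sum_coe_sort S fun x => if sideOf T hT p.1 p.2 (ρ x) then (1 : ℝ) else 0,
    Finset.sum_boole]

theorem abs_phi_sub_phi {X V : Type} (T : SimpleGraph V) (hT : T.IsTree) {w : Sym2 V → ℝ}
    (ρ : X → V) (A B : Finset X) {p : V × V} (hw : 0 ≤ w s(p.1, p.2)) :
    |phi T hT w ρ A p - phi T hT w ρ B p| =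
      w s(p.1, p.2) * |∑ a : A, (if sideOf T hT p.1 p.2 (ρ a) then (1 : ℝ) else 0) -
        ∑ b : B, if sideOf T hT p.1 p.2 (ρ b) then 1 else 0| := by
  rw [phi_eq_sum_mul, phi_eq_sum_mul, ← sub_mul, abs_mul, abs_of_nonneg hw, mul_comm]

theorem optimal_assignment_eq_manhattan_general
    {X V : Type}
    (T : SimpleGraph V) (hT : T.IsTree) (w : Sym2 V → ℝ) (hw : ∀ e, 0 ≤ w e)
    (ρ : X → V) (A B : Finset X) (hcard : A.card = B.card)
    (D : Finset (V × V))
    (hD : ∀ p ∈ D, T.Adj p.1 p.2)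
    (hDorient : ∀ u v : V, T.Adj u v →
      ((u, v) ∈ D ∧ (v, u) ∉ D) ∨ ((v, u) ∈ D ∧ (u, v) ∉ D)) :
    IsLeast {r : ℝ | ∃ f : {x // x ∈ A} ≃ {y // y ∈ B},
        r = ∑ a : {x // x ∈ A}, treeDist T hT w (ρ a.1) (ρ (f a).1)}
      (∑ p ∈ D, |phi T hT w ρ A p - phi T hT w ρ B p|) := by
  simp only [hT.treeDist_eq_cutDist hD hDorient, abs_phi_sub_phi T hT ρ A B (hw _)]
  exact isLeast_sum_cutDist (α := A) (β := B) (by simpa using hcard) (fun _ _ => hw _)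
    (fun p hp q hq => hT.not_crosses_sideOf (hD p hp) (hD q hq)) (fun a => ρ a) (fun b => ρ b)

/-- With tree-metric ground costs, the optimal assignment cost between `A` and
`B` equals the Manhattan (ℓ1) distance between the vectors `Φ(A)` and `Φ(B)`, where `Φ(S)` is
indexed by the (oriented) edges of `T` with entries `S_{uv} ⬝ w(uv)`. -/
theorem optimal_assignment_eq_manhattan
    {X V : Type} [Fintype V]
    (T : SimpleGraph V) (hT : T.IsTree) (w : Sym2 V → ℝ) (hw : ∀ e, 0 ≤ w e)
    (ρ : X → V) (A B : Finset X) (hcard : A.card = B.card)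
    (D : Finset (V × V))
    (hD : ∀ p ∈ D, T.Adj p.1 p.2)
    (hDorient : ∀ u v : V, T.Adj u v →
      ((u, v) ∈ D ∧ (v, u) ∉ D) ∨ ((v, u) ∈ D ∧ (u, v) ∉ D)) :
    IsLeast {r : ℝ | ∃ f : {x // x ∈ A} ≃ {y // y ∈ B},
        r = ∑ a : {x // x ∈ A}, treeDist T hT w (ρ a.1) (ρ (f a).1)}
      (∑ p ∈ D, |phi T hT w ρ A p - phi T hT w ρ B p|) :=
  optimal_assignment_eq_manhattan_general T hT w hw ρ A B hcard D hD hDorient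
end

section
/- A metric d on a finite set X is a tree metric (i.e., is realized by path distances in some positively weighted tree containing X among its nodes) if and only if for all v, w, x, y ∈ X: d(x,y) + d(v,w) ≤ max{ d(x,v) + d(y,w), d(x,w) + d(y,v) } (the four-point condition). -/
open scoped Classical

/-- `d` is a metric on `X`. -/
def IsMetricOn {X : Type*} (d : X → X → ℝ) : Prop :=
  (∀ x y, 0 ≤ d x y) ∧ (∀ x y, d x y = 0 ↔ x = y) ∧ (∀ x y, d x y = d y x) ∧
    ∀ x y z, d x y ≤ d x z + d y z

/-!
In a positively weighted tree the path between two vertices is unique, so any three vertices have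
a median lying on all three connecting paths. For `x y v w`, the medians of `x y v` and of `x y w`
both lie on the path from `x` to `y`; comparing their order along it gives the four-point
condition.

Conversely, realize the points one at a time. To add `x` to a tree realizing the other points,
pick `y, z` minimizing the Gromov product `α = (y|z)_x`. The four-point condition then says
`d(x,u) - α = max (d(u,y) - β) (d(u,z) - (d(y,z) - β))` for every `u`, where `β = d(x,y) - α`,
and the right-hand side is the tree distance from `u` to the point `c` at distance `β` from `y` on
the path to `z`. Make `c` a vertex, subdividing an edge if necessary, and hang `x` from `c` on a
new edge of length `α` (or put `x` at `c` if `α = 0`).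
-/

open SimpleGraph

namespace SimpleGraph.Walk

variable {V : Type*} {G : SimpleGraph V} {u v x : V}

def weight (w : Sym2 V → ℝ) (p : G.Walk u v) : ℝ := (p.edges.map w).sum

variable (w : Sym2 V → ℝ)

@[simp] lemma weight_nil : (nil : G.Walk u u).weight w = 0 := rfl

@[simp] lemma weight_cons (h : G.Adj u v) (p : G.Walk v x) :
    (cons h p).weight w = w s(u, v) + p.weight w := by
  simp [weight]

@[simp] lemma weight_append (p : G.Walk u v) (q : G.Walk v x) :
    (p.append q).weight w = p.weight w + q.weight w := by
  simp [weight]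

@[simp] lemma weight_reverse (p : G.Walk u v) : p.reverse.weight w = p.weight w := by
  simp [weight]

variable {w}

lemma weight_bypass_le [DecidableEq V] (hw : ∀ e ∈ G.edgeSet, 0 ≤ w e) (p : G.Walk u v) :
    p.bypass.weight w ≤ p.weight w :=
  (p.edges_bypass_sublist_edges.map w).sum_le_sum <| by
    simpa using fun e he => hw e (p.edges_subset_edgeSet he)

lemma le_weight_of_triangle {D : V → V → ℝ} (hD : ∀ x, D x x ≤ 0)
    (htri : ∀ x y z, D x z ≤ D x y + D y z) (hadj : ∀ x y, G.Adj x y → D x y ≤ w s(x, y))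
    (p : G.Walk u v) : D u v ≤ p.weight w := by
  induction p with
  | nil => exact hD _
  | cons h p ih => exact (htri _ _ _).trans (by simpa using add_le_add (hadj _ _ h) ih)

lemma exists_prefix_weight_eq_or_edge (p : G.Walk u v) {β : ℝ} (h0 : 0 ≤ β)
    (h1 : β ≤ p.weight w) :
    (∃ (c : V) (p₁ : G.Walk u c) (p₂ : G.Walk c v),
      p = p₁.append p₂ ∧ p₁.weight w = β) ∨
    ∃ (a b : V) (hab : G.Adj a b) (p₁ : G.Walk u a) (p₂ : G.Walk b v),
      p = p₁.append (cons hab p₂) ∧ p₁.weight w < β ∧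
        β < p₁.weight w + w s(a, b) := by
  induction p generalizing β with
  | nil => exact .inl ⟨_, nil, nil, rfl, by simpa using (le_antisymm h1 h0).symm⟩
  | @cons u y v h p ih =>
    rcases h0.eq_or_lt with rfl | hpos
    · exact .inl ⟨u, nil, cons h p, rfl, rfl⟩
    rcases lt_or_ge β (w s(u, y)) with hlt | hge
    · exact .inr ⟨u, y, h, nil, p, rfl, by simpa using hpos, by simpa using hlt⟩
    rw [weight_cons] at h1
    rcases ih (β := β - w s(u, y)) (by linarith) (by linarith) with
      ⟨c, p₁, p₂, rfl, hw₁⟩ | ⟨a, b, hab, p₁, p₂, rfl, hlt₁, hlt₂⟩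
    · exact .inl ⟨c, cons h p₁, p₂, rfl, by simp [hw₁]⟩
    · exact .inr ⟨a, b, hab, cons h p₁, p₂, rfl, by simp; linarith, by simp; linarith⟩

lemma IsPath.append {p : G.Walk u v} {q : G.Walk v x} (hp : p.IsPath) (hq : q.IsPath)
    (h : ∀ t ∈ p.support, t ∈ q.support → t = v) : (p.append q).IsPath := by
  rw [isPath_def, support_append, List.nodup_append]
  refine ⟨hp.support_nodup, hq.support_nodup.sublist q.support.tail_sublist, ?_⟩
  rintro t htp _ htq rfl
  have hnd := hq.support_nodup
  rw [← q.cons_tail_support] at hnd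
  exact (List.nodup_cons.1 hnd).1 (h t htp (List.mem_of_mem_tail htq) ▸ htq)

end SimpleGraph.Walk

section treeDist

variable {V : Type*} {T : SimpleGraph V} (hT : T.IsTree) {w : Sym2 V → ℝ}

local notation "d" => treeDist T hT w

lemma treeDist_eq_weight {u v : V} {P : T.Walk u v} (hP : P.IsPath) : d u v = P.weight w :=
  congrArg (Walk.weight w) <|
    (hT.existsUnique_path u v).unique (hT.existsUnique_path u v).exists.choose_spec hP

lemma treeDist_self (u : V) : d u u = 0 :=
  treeDist_eq_weight hT Walk.IsPath.nil

lemma treeDist_comm_s3 (u v : V) : d u v = d v u := by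
  obtain ⟨P, hP, -⟩ := hT.existsUnique_path v u
  rw [treeDist_eq_weight hT hP.reverse, treeDist_eq_weight hT hP, Walk.weight_reverse]

lemma treeDist_of_adj {u v : V} (h : T.Adj u v) : d u v = w s(u, v) := by
  simp [treeDist_eq_weight hT h.isPath_toWalk, Walk.weight]

lemma sub_le_treeDist {f : V → ℝ} (hf : ∀ x y, T.Adj x y → f y - f x ≤ w s(x, y))
    (u v : V) : f v - f u ≤ d u v := by
  obtain ⟨P, hP, -⟩ := hT.existsUnique_path u v
  rw [treeDist_eq_weight hT hP]
  exact Walk.le_weight_of_triangle (D := fun x y => f y - f x) (by simp)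
    (fun _ _ _ => by linarith) hf P

lemma treeDist_add_treeDist_of_mem_support {u v m : V} {P : T.Walk u v} (hP : P.IsPath)
    (hm : m ∈ P.support) : d u m + d m v = d u v := by
  obtain ⟨q, r, hq, hr, rfl⟩ := hP.mem_support_iff_exists_append.1 hm
  rw [treeDist_eq_weight hT hq, treeDist_eq_weight hT hr, treeDist_eq_weight hT hP,
    Walk.weight_append]

lemma treeDist_eq_add_or_eq_add {u v s t : V} {P : T.Walk u v} (hP : P.IsPath)
    (hs : s ∈ P.support) (ht : t ∈ P.support) :
    d u t = d u s + d s t ∨ d u s = d u t + d t s := by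
  obtain ⟨q, r, hq, hr, rfl⟩ := hP.mem_support_iff_exists_append.1 hs
  rcases (Walk.mem_support_append_iff _ _).1 ht with htq | htr
  · exact .inr (treeDist_add_treeDist_of_mem_support hT hq htq).symm
  · have h₁ := treeDist_add_treeDist_of_mem_support hT (w := w) hr htr
    have h₂ := treeDist_add_treeDist_of_mem_support hT (w := w) hP hs
    have h₃ := treeDist_add_treeDist_of_mem_support hT (w := w) hP ht
    exact .inl (by linarith)

variable (hw : ∀ e ∈ T.edgeSet, 0 < w e)
include hw

lemma treeDist_le_weight {u v : V} (p : T.Walk u v) : d u v ≤ p.weight w := by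
  rw [treeDist_eq_weight hT p.bypass_isPath]
  exact Walk.weight_bypass_le (fun e he => (hw e he).le) p

lemma treeDist_triangle_s3 (u v x : V) : d u x ≤ d u v + d v x := by
  obtain ⟨P, hP, -⟩ := hT.existsUnique_path u v
  obtain ⟨Q, hQ, -⟩ := hT.existsUnique_path v x
  simpa [treeDist_eq_weight hT hP, treeDist_eq_weight hT hQ] using
    treeDist_le_weight hT hw (P.append Q)

lemma treeDist_nonneg (u v : V) : 0 ≤ d u v := by
  linarith [treeDist_triangle_s3 hT hw u v u, treeDist_self hT (w := w) u,
    treeDist_comm_s3 hT (w := w) u v]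

lemma treeDist_pos {u v : V} (h : u ≠ v) : 0 < d u v := by
  obtain ⟨P, hP, -⟩ := hT.existsUnique_path u v
  cases P with
  | nil => exact absurd rfl h
  | @cons _ y _ hadj Q =>
    rw [treeDist_eq_weight hT hP, Walk.weight_cons, ← treeDist_eq_weight hT hP.of_cons]
    linarith [hw s(_, _) hadj, treeDist_nonneg hT hw y v]

lemma treeDist_eq_zero_iff {u v : V} : d u v = 0 ↔ u = v :=
  ⟨fun h => by_contra fun hne => (treeDist_pos hT hw hne).ne' h,
    fun h => h ▸ treeDist_self hT u⟩

lemma exists_median {y z : V} {P : T.Walk y z} (hP : P.IsPath) (u : V) :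
    ∃ m ∈ P.support, d y u = d y m + d m u ∧ d z u = d z m + d m u := by
  obtain ⟨m, hmP, hmin⟩ := P.support.toFinset.exists_min_image (d · u) ⟨y, by simp⟩
  simp only [List.mem_toFinset] at hmP hmin
  obtain ⟨R, hR, -⟩ := hT.existsUnique_path m u
  -- `R` meets `P` only in `m`, the point of `P` closest to `u`
  have through_m : ∀ {y'} (q : T.Walk y' m), q.IsPath → q.support ⊆ P.support →
      d y' u = d y' m + d m u := by
    intro y' q hq hqP
    refine (treeDist_eq_weight hT (hq.append hR fun t htq htR => ?_)).trans ?_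
    · have hsplit := treeDist_add_treeDist_of_mem_support hT (w := w) hR htR
      have hmt := hmin t (hqP htq)
      exact ((treeDist_eq_zero_iff hT hw).1 (le_antisymm (by linarith)
        (treeDist_nonneg hT hw m t))).symm
    · rw [Walk.weight_append, ← treeDist_eq_weight hT hq, ← treeDist_eq_weight hT hR]
  obtain ⟨q, r, hq, hr, rfl⟩ := hP.mem_support_iff_exists_append.1 hmP
  refine ⟨m, hmP, through_m q hq fun t ht => ?_, through_m r.reverse hr.reverse fun t ht => ?_⟩
  · exact (Walk.mem_support_append_iff _ _).2 (.inl ht)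
  · rw [Walk.support_reverse, List.mem_reverse] at ht
    exact (Walk.mem_support_append_iff _ _).2 (.inr ht)

lemma mem_support_of_treeDist_add_treeDist {y z c : V} {P : T.Walk y z} (hP : P.IsPath)
    (hc : d y c + d c z = d y z) : c ∈ P.support := by
  obtain ⟨m, hmP, hy, hz⟩ := exists_median hT hw hP c
  have hm := treeDist_add_treeDist_of_mem_support hT (w := w) hP hmP
  have hmc : d m c = 0 := by linarith [treeDist_comm_s3 hT (w := w) c z, treeDist_comm_s3 hT (w := w) m z]
  rwa [(treeDist_eq_zero_iff hT hw).1 hmc] at hmP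

lemma treeDist_eq_max_of_treeDist_add_treeDist {y z c : V} (hc : d y c + d c z = d y z)
    (u : V) : d u c = max (d u y - d y c) (d u z - d c z) := by
  obtain ⟨P, hP, -⟩ := hT.existsUnique_path y z
  obtain ⟨m, hmP, hy, hz⟩ := exists_median hT hw hP u
  have hm := treeDist_add_treeDist_of_mem_support hT (w := w) hP hmP
  have hcy := treeDist_triangle_s3 hT hw u c y
  have hcz := treeDist_triangle_s3 hT hw u c z
  have hum := treeDist_triangle_s3 hT hw u m c
  have hcomm := treeDist_comm_s3 hT (w := w)
  refine le_antisymm ?_ (max_le (by linarith [hcomm c y]) (by linarith))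
  rcases treeDist_eq_add_or_eq_add hT hP (mem_support_of_treeDist_add_treeDist hT hw hP hc) hmP
    with h | h
  · exact le_max_of_le_left (by linarith [hcomm u y, hcomm u m, hcomm c m])
  · exact le_max_of_le_right (by linarith [hcomm u z, hcomm u m, hcomm z m])

lemma treeDist_four_point (v v' x y : V) :
    d x y + d v v' ≤ max (d x v + d y v') (d x v' + d y v) := by
  obtain ⟨P, hP, -⟩ := hT.existsUnique_path x y
  obtain ⟨m, hmP, hxv, hyv⟩ := exists_median hT hw hP v
  obtain ⟨m', hm'P, hxv', hyv'⟩ := exists_median hT hw hP v'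
  have hm := treeDist_add_treeDist_of_mem_support hT (w := w) hP hmP
  have hm' := treeDist_add_treeDist_of_mem_support hT (w := w) hP hm'P
  have hvv' := treeDist_triangle_s3 hT hw v m v'
  have hmv' := treeDist_triangle_s3 hT hw m m' v'
  have hm'v := treeDist_triangle_s3 hT hw v' m' v
  have hmv := treeDist_triangle_s3 hT hw m' m v
  have hcomm := treeDist_comm_s3 hT (w := w)
  rcases treeDist_eq_add_or_eq_add hT hP hmP hm'P with h | h
  · exact le_max_of_le_right (by linarith [hcomm m v, hcomm y m, hcomm m' v'])
  · exact le_max_of_le_left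
      (by linarith [hcomm m' v', hcomm y m', hcomm m v, hcomm v v', hcomm m m'])

end treeDist

namespace SimpleGraph

variable {V W : Type*} {G : SimpleGraph V} {H : SimpleGraph W}

lemma Reachable.map_of_adj {f : V → W} (hf : ∀ x y, G.Adj x y → H.Reachable (f x) (f y))
    {u v : V} (h : G.Reachable u v) : H.Reachable (f u) (f v) := by
  obtain ⟨p⟩ := h
  induction p with
  | nil => rfl
  | cons h _ ih => exact (hf _ _ h).trans ih

lemma IsAcyclic.not_reachable_deleteEdges {u v : V} (hG : G.IsAcyclic) (h : G.Adj u v) :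
    ¬(G.deleteEdges {s(u, v)}).Reachable u v :=
  isBridge_iff.1 (isAcyclic_iff_forall_adj_isBridge.1 hG h)

/-- For `a = b` this hangs a new leaf `none` at `a`; for an edge `ab` it subdivides that edge by
`none`. -/
def attach (G : SimpleGraph V) (a b : V) : SimpleGraph (Option V) where
  Adj
    | some u, some v => G.Adj u v ∧ s(u, v) ≠ s(a, b)
    | none, some u | some u, none => u = a ∨ u = b
    | none, none => False
  symm := by
    constructor
    rintro (_ | u) (_ | v) h <;> try exact h
    exact ⟨h.1.symm, Sym2.eq_swap.trans_ne h.2⟩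
  loopless := by
    constructor
    rintro (_ | u) h
    · exact h
    · exact h.1.ne rfl

variable {a b : V}

@[simp] lemma attach_adj_some_some {u v : V} :
    (G.attach a b).Adj (some u) (some v) ↔ G.Adj u v ∧ s(u, v) ≠ s(a, b) := .rfl

@[simp] lemma attach_adj_none_some {u : V} : (G.attach a b).Adj none (some u) ↔ u = a ∨ u = b :=
  .rfl

@[simp] lemma attach_adj_some_none {u : V} : (G.attach a b).Adj (some u) none ↔ u = a ∨ u = b :=
  .rfl

lemma attach_comm : G.attach a b = G.attach b a := by
  ext (_ | u) (_ | v) <;> simp [Sym2.eq_swap, or_comm]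

lemma Connected.attach (hG : G.Connected) : (G.attach a b).Connected := by
  have adj_of_eq {u v : V} (h : s(u, v) = s(a, b)) : (G.attach a b).Adj none (some u) :=
    Sym2.mem_iff.1 (h ▸ Sym2.mem_mk_left u v)
  have hsome : ∀ u v, G.Adj u v → (G.attach a b).Reachable (some u) (some v) := by
    intro u v h
    by_cases he : s(u, v) = s(a, b)
    · exact (adj_of_eq he).symm.reachable.trans (adj_of_eq (Sym2.eq_swap.trans he)).reachable
    · exact Adj.reachable ⟨h, he⟩
  have hroot : ∀ x, (G.attach a b).Reachable none x := by
    rintro (_ | v)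
    · rfl
    · exact (Adj.reachable (by simp : (G.attach a b).Adj none (some a))).trans
        ((hG.preconnected a v).map_of_adj hsome)
  exact ⟨fun x y => (hroot x).symm.trans (hroot y)⟩

-- Each edge of `G.attach a b` is a bridge: collapsing `none` onto `a` or `b` turns a detour
-- around it into a detour around an edge of `G`.
lemma IsAcyclic.not_reachable_attach_deleteEdges_none (hG : G.IsAcyclic)
    (hab : a = b ∨ G.Adj a b) :
    ¬((G.attach a b).deleteEdges {s(none, some a)}).Reachable none (some a) := by
  rcases hab with rfl | hab
  · rintro ⟨_ | @⟨_, v, _, h, _⟩⟩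
    rcases v with _ | y
    · exact (deleteEdges_adj.1 h).1
    · obtain ⟨hy, hne⟩ := deleteEdges_adj.1 h
      exact hne (by rw [hy.elim id id]; rfl)
  refine fun hr => hG.not_reachable_deleteEdges hab
    (hr.map_of_adj (f := fun o => o.elim b id) ?_).symm
  have hend : ∀ y, y = a ∨ y = b → s(none, some y) ≠ s(none, some a) → y = b := by
    rintro y (rfl | rfl) hy
    exacts [(hy rfl).elim, rfl]
  rintro (_ | x) (_ | y) hxy <;> simp only [deleteEdges_adj, Set.mem_singleton_iff] at hxy
  · exact hxy.1.elim
  · exact (hend y hxy.1 hxy.2).symm ▸ .rfl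
  · exact (hend x hxy.1 (Sym2.eq_swap.trans_ne hxy.2)) ▸ .rfl
  · exact Adj.reachable (deleteEdges_adj.2 ⟨hxy.1.1, fun h => hxy.1.2 h⟩)

lemma IsAcyclic.not_reachable_attach_deleteEdges_some (hG : G.IsAcyclic)
    (hab : a = b ∨ G.Adj a b) {p q : V} (hpq : (G.attach a b).Adj (some p) (some q)) :
    ¬((G.attach a b).deleteEdges {s(some p, some q)}).Reachable (some p) (some q) := by
  have hend : ∀ y, y = a ∨ y = b → (G.deleteEdges {s(p, q)}).Reachable a y := by
    rintro y (rfl | rfl)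
    · rfl
    · rcases hab with rfl | hab
      · rfl
      · exact Adj.reachable
          (deleteEdges_adj.2 ⟨hab, fun h => hpq.2 (Set.mem_singleton_iff.1 h).symm⟩)
  refine fun hr => hG.not_reachable_deleteEdges hpq.1 (hr.map_of_adj (f := fun o => o.elim a id) ?_)
  rintro (_ | x) (_ | y) hxy <;> simp only [deleteEdges_adj, Set.mem_singleton_iff] at hxy
  · exact hxy.1.elim
  · exact hend y hxy.1
  · exact (hend x hxy.1).symm
  · refine Adj.reachable (deleteEdges_adj.2 ⟨hxy.1.1, fun h => hxy.2 ?_⟩)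
    simpa using congrArg (Sym2.map some) (Set.mem_singleton_iff.1 h : s(x, y) = s(p, q))

lemma IsAcyclic.attach (hG : G.IsAcyclic) (hab : a = b ∨ G.Adj a b) :
    (G.attach a b).IsAcyclic := by
  have hnone : ∀ q, q = a ∨ q = b →
      ¬((G.attach a b).deleteEdges {s(none, some q)}).Reachable none (some q) := by
    rintro q (rfl | rfl)
    · exact hG.not_reachable_attach_deleteEdges_none hab
    · rw [attach_comm]
      exact hG.not_reachable_attach_deleteEdges_none (hab.imp Eq.symm Adj.symm)
  refine isAcyclic_iff_forall_adj_isBridge.2 ?_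
  rintro (_ | p) (_ | q) hpq <;> rw [isBridge_iff]
  · exact hpq.elim
  · exact hnone q hpq
  · exact fun hr => hnone p hpq (by rw [Sym2.eq_swap]; exact hr.symm)
  · exact hG.not_reachable_attach_deleteEdges_some hab hpq

lemma IsTree.attach (hG : G.IsTree) (hab : a = b ∨ G.Adj a b) : (G.attach a b).IsTree :=
  ⟨hG.connected.attach, hG.isAcyclic.attach hab⟩

end SimpleGraph
section attach

variable {V : Type*}

def attachWeight (w : Sym2 V → ℝ) (ℓ : V → ℝ) : Sym2 (Option V) → ℝ :=
  Sym2.lift ⟨fun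
    | some u, some v => w s(u, v)
    | none, some u | some u, none => ℓ u
    | none, none => 0, by rintro (_ | u) (_ | v) <;> simp [Sym2.eq_swap]⟩

variable {T : SimpleGraph V} {w : Sym2 V → ℝ} {ℓ : V → ℝ} {a b : V}

@[simp] lemma attachWeight_some_some (u v : V) :
    attachWeight w ℓ s(some u, some v) = w s(u, v) := rfl

@[simp] lemma attachWeight_none_some (u : V) : attachWeight w ℓ s(none, some u) = ℓ u := rfl

@[simp] lemma attachWeight_some_none (u : V) : attachWeight w ℓ s(some u, none) = ℓ u := rfl

lemma attachWeight_pos (hw : ∀ e ∈ T.edgeSet, 0 < w e) (ha : 0 < ℓ a) (hb : 0 < ℓ b) :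
    ∀ e ∈ (T.attach a b).edgeSet, 0 < attachWeight w ℓ e := by
  rintro ⟨_ | u, _ | v⟩ he
  · exact he.elim
  · rcases he with rfl | rfl <;> assumption
  · rcases he with rfl | rfl <;> assumption
  · exact hw s(u, v) he.1

variable (hT : T.IsTree) (hw : ∀ e ∈ T.edgeSet, 0 < w e)
  (hab : a = b ∨ T.Adj a b ∧ ℓ a + ℓ b = w s(a, b)) (ha : 0 < ℓ a) (hb : 0 < ℓ b)
  (hA : (T.attach a b).IsTree)
include hw hab ha hb

local notation "d" => treeDist T hT w
local notation "d'" => treeDist (T.attach a b) hA (attachWeight w ℓ)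

lemma treeDist_attach_some_le (u v : V) : d' (some u) (some v) ≤ d u v := by
  have hw' := attachWeight_pos hw ha hb
  obtain ⟨P, hP, -⟩ := hT.existsUnique_path u v
  rw [treeDist_eq_weight hT hP]
  refine Walk.le_weight_of_triangle (D := fun x y => d' (some x) (some y))
    (fun x => (treeDist_self hA _).le) (fun x y z => treeDist_triangle_s3 hA hw' _ _ _) ?_ P
  intro x y hxy
  by_cases he : s(x, y) = s(a, b)
  · have hsum : ℓ a + ℓ b = w s(a, b) := by
      refine hab.resolve_left ?_ |>.2
      rintro rfl
      rcases Sym2.eq_iff.1 he with ⟨rfl, rfl⟩ | ⟨rfl, rfl⟩ <;> exact hxy.ne rfl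
    refine (treeDist_triangle_s3 hA hw' (some x) none (some y)).trans_eq ?_
    rcases Sym2.eq_iff.1 he with ⟨rfl, rfl⟩ | ⟨rfl, rfl⟩
    · rw [treeDist_of_adj hA (by simp), treeDist_of_adj hA (by simp)]
      simpa using hsum
    · rw [treeDist_of_adj hA (by simp), treeDist_of_adj hA (by simp), attachWeight_some_none,
        attachWeight_none_some, Sym2.eq_swap, ← hsum, add_comm]
  · exact (treeDist_of_adj hA (show (T.attach a b).Adj (some x) (some y) from ⟨hxy, he⟩)).le

lemma le_treeDist_attach (u : V) (z : Option V) :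
    z.elim (min (ℓ a + d a u) (ℓ b + d b u)) (d u) ≤ d' (some u) z := by
  have hcomm := treeDist_comm_s3 hT (w := w)
  have htri := treeDist_triangle_s3 hT hw
  have hab' : d a b ≤ ℓ a + ℓ b := by
    rcases hab with rfl | ⟨hab, hsum⟩
    · rw [treeDist_self]; linarith
    · rw [treeDist_of_adj hT hab, hsum]
  let f : Option V → ℝ := fun z => z.elim (min (ℓ a + d a u) (ℓ b + d b u)) (d u)
  have hf : ∀ x y, (T.attach a b).Adj x y → f y - f x ≤ attachWeight w ℓ s(x, y) := by
    rintro (_ | x) (_ | y) hxy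
    · exact hxy.elim
    · suffices d u y - ℓ y ≤ min (ℓ a + d a u) (ℓ b + d b u) by
        simp only [f, Option.elim_none, Option.elim_some, attachWeight_none_some]; linarith
      rcases hxy with h | h <;> rw [h] <;> refine le_min ?_ ?_ <;>
        linarith [hcomm u a, hcomm u b, hcomm a b, htri u a b, htri u b a]
    · suffices min (ℓ a + d a u) (ℓ b + d b u) ≤ ℓ x + d u x by
        simp only [f, Option.elim_none, Option.elim_some, attachWeight_some_none]; linarith
      rcases hxy with h | h <;> rw [h, hcomm u]
      exacts [min_le_left _ _, min_le_right _ _]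
    · simp only [f, Option.elim_some, attachWeight_some_some, ← treeDist_of_adj hT hxy.1]
      linarith [htri u x y]
  simpa [f, treeDist_self] using sub_le_treeDist hA hf (some u) z

lemma treeDist_attach_some_some (u v : V) : d' (some u) (some v) = d u v :=
  (treeDist_attach_some_le hT hw hab ha hb hA u v).antisymm
    (by simpa using le_treeDist_attach hT hw hab ha hb hA u (some v))

lemma treeDist_attach_some_none (u : V) :
    d' (some u) none = min (ℓ a + d a u) (ℓ b + d b u) := by
  have hw' := attachWeight_pos hw ha hb
  refine le_antisymm (le_min ?_ ?_) (le_treeDist_attach hT hw hab ha hb hA u none)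
  · calc d' (some u) none ≤ d' (some u) (some a) + d' (some a) none :=
          treeDist_triangle_s3 hA hw' _ _ _
      _ = ℓ a + d a u := by
        rw [treeDist_attach_some_some hT hw hab ha hb hA, treeDist_of_adj hA (by simp),
          attachWeight_some_none, treeDist_comm_s3 hT, add_comm]
  · calc d' (some u) none ≤ d' (some u) (some b) + d' (some b) none :=
          treeDist_triangle_s3 hA hw' _ _ _
      _ = ℓ b + d b u := by
        rw [treeDist_attach_some_some hT hw hab ha hb hA, treeDist_of_adj hA (by simp),
          attachWeight_some_none, treeDist_comm_s3 hT, add_comm]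

end attach

structure WeightedTree where
  V : Type
  [fintype : Fintype V]
  graph : SimpleGraph V
  isTree : graph.IsTree
  weight : Sym2 V → ℝ
  weight_pos : ∀ e ∈ graph.edgeSet, 0 < weight e

namespace WeightedTree

attribute [instance] fintype

variable (W : WeightedTree)

noncomputable def dist (u v : W.V) : ℝ := treeDist W.graph W.isTree W.weight u v

lemma dist_self (u : W.V) : W.dist u u = 0 := treeDist_self W.isTree u

lemma dist_comm (u v : W.V) : W.dist u v = W.dist v u := treeDist_comm_s3 W.isTree u v

lemma dist_triangle (u v x : W.V) : W.dist u x ≤ W.dist u v + W.dist v x :=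
  treeDist_triangle_s3 W.isTree W.weight_pos u v x

lemma exists_pendant (c : W.V) {α : ℝ} (hα : 0 ≤ α) :
    ∃ (W' : WeightedTree) (j : W.V → W'.V) (x : W'.V),
      (∀ u v, W'.dist (j u) (j v) = W.dist u v) ∧ ∀ u, W'.dist x (j u) = α + W.dist c u := by
  rcases hα.eq_or_lt with rfl | hα
  · exact ⟨W, id, c, fun _ _ => rfl, by simp⟩
  have hcc : c = c ∨ W.graph.Adj c c ∧ α + α = W.weight s(c, c) := .inl rfl
  have hA := W.isTree.attach (.inl rfl : c = c ∨ W.graph.Adj c c)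
  refine ⟨⟨Option W.V, W.graph.attach c c, hA, attachWeight W.weight fun _ => α,
    attachWeight_pos W.weight_pos hα hα⟩, some, none,
    treeDist_attach_some_some W.isTree W.weight_pos hcc hα hα hA, fun u => ?_⟩
  rw [dist, treeDist_comm_s3, treeDist_attach_some_none W.isTree W.weight_pos hcc hα hα, min_self]
  rfl

lemma exists_vertex_on_edge {a b : W.V} (hab : W.graph.Adj a b) {t : ℝ} (h0 : 0 < t)
    (h1 : t < W.weight s(a, b)) :
    ∃ (W' : WeightedTree) (j : W.V → W'.V) (c : W'.V),
      (∀ u v, W'.dist (j u) (j v) = W.dist u v) ∧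
      W'.dist (j a) c = t ∧ W'.dist c (j b) = W.weight s(a, b) - t := by
  set ℓ : W.V → ℝ := fun v => if v = a then t else W.weight s(a, b) - t
  have hℓa : ℓ a = t := if_pos rfl
  have hℓb : ℓ b = W.weight s(a, b) - t := if_neg hab.ne.symm
  have ha : 0 < ℓ a := hℓa ▸ h0
  have hb : 0 < ℓ b := hℓb ▸ sub_pos.2 h1
  have hA := W.isTree.attach (.inr hab)
  refine ⟨⟨Option W.V, W.graph.attach a b, hA, attachWeight W.weight ℓ,
    attachWeight_pos W.weight_pos ha hb⟩, some, none,
    treeDist_attach_some_some W.isTree W.weight_pos (.inr ⟨hab, by rw [hℓa, hℓb]; ring⟩)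
      ha hb hA, ?_, ?_⟩
  · exact (treeDist_of_adj hA (by simp)).trans hℓa
  · exact (treeDist_of_adj hA (by simp)).trans hℓb

lemma exists_vertex_between (p q : W.V) {β : ℝ} (h0 : 0 ≤ β) (h1 : β ≤ W.dist p q) :
    ∃ (W' : WeightedTree) (j : W.V → W'.V) (c : W'.V),
      (∀ u v, W'.dist (j u) (j v) = W.dist u v) ∧
      W'.dist (j p) c = β ∧ W'.dist c (j q) = W.dist p q - β := by
  obtain ⟨P, hP, -⟩ := W.isTree.existsUnique_path p q
  have hpq : W.dist p q = P.weight W.weight := treeDist_eq_weight W.isTree hP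
  rw [hpq] at h1 ⊢
  rcases P.exists_prefix_weight_eq_or_edge h0 h1 with
    ⟨c, p₁, p₂, rfl, hp₁⟩ | ⟨a, b, hab, p₁, p₂, rfl, hlt₁, hlt₂⟩
  · refine ⟨W, id, c, fun _ _ => rfl, ?_, ?_⟩
    · rw [← hp₁]; exact treeDist_eq_weight W.isTree hP.of_append_left
    · rw [Walk.weight_append, ← hp₁, add_sub_cancel_left]
      exact treeDist_eq_weight W.isTree hP.of_append_right
  obtain ⟨W', j, c, hj, hac, hcb⟩ :=
    W.exists_vertex_on_edge hab (t := β - p₁.weight W.weight) (by linarith) (by linarith)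
  have hpa : W.dist p a = p₁.weight W.weight := treeDist_eq_weight W.isTree hP.of_append_left
  have hbq : W.dist b q = p₂.weight W.weight :=
    treeDist_eq_weight W.isTree hP.of_append_right.of_cons
  -- the route `j p, j a, c, j b, j q` has length `W.dist p q`, so these inequalities are tight
  have hpc := W'.dist_triangle (j p) (j a) c
  have hcq := W'.dist_triangle c (j b) (j q)
  have hpcq := W'.dist_triangle (j p) c (j q)
  rw [hj] at hpc hcq hpcq
  rw [hpq] at hpcq
  simp only [Walk.weight_append, Walk.weight_cons] at hpcq ⊢
  exact ⟨W', j, c, hj, by linarith, by linarith⟩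

end WeightedTree

section realization

variable {X Y : Type}

def FourPoint (d : X → X → ℝ) : Prop :=
  ∀ v w x y, d x y + d v w ≤ max (d x v + d y w) (d x w + d y v)

def TreeRealizable (d : X → X → ℝ) : Prop :=
  ∃ (W : WeightedTree) (ι : X → W.V), ∀ x y, d x y = W.dist (ι x) (ι y)

noncomputable def gromovProduct (d : X → X → ℝ) (x y z : X) : ℝ :=
  (d x y + d x z - d y z) / 2

lemma IsMetricOn.comp {d : X → X → ℝ} (hd : IsMetricOn d) {f : Y → X} (hf : f.Injective) :
    IsMetricOn fun u v => d (f u) (f v) :=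
  ⟨fun _ _ => hd.1 _ _, fun _ _ => (hd.2.1 _ _).trans hf.eq_iff, fun _ _ => hd.2.2.1 _ _,
    fun _ _ _ => hd.2.2.2 _ _ _⟩

lemma FourPoint.comp {d : X → X → ℝ} (h4 : FourPoint d) (f : Y → X) :
    FourPoint fun u v => d (f u) (f v) :=
  fun _ _ _ _ => h4 _ _ _ _

lemma TreeRealizable.comp {d : X → X → ℝ} (hd : TreeRealizable d) (f : Y → X) :
    TreeRealizable fun u v => d (f u) (f v) :=
  let ⟨W, ι, hι⟩ := hd
  ⟨W, ι ∘ f, fun _ _ => hι _ _⟩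

lemma treeRealizable_of_isEmpty [IsEmpty X] (d : X → X → ℝ) : TreeRealizable d :=
  ⟨⟨Unit, ⊥, .of_subsingleton, 0, by simp⟩, isEmptyElim, isEmptyElim⟩

lemma FourPoint.max_sub_eq_sub_gromovProduct {d : X → X → ℝ} (h4 : FourPoint d) {x y z u : X}
    (hy : gromovProduct d x y z ≤ gromovProduct d x u y)
    (hz : gromovProduct d x y z ≤ gromovProduct d x u z) :
    max (d u y - (d x y - gromovProduct d x y z)) (d u z - (d x z - gromovProduct d x y z)) =
      d x u - gromovProduct d x y z := by
  unfold gromovProduct at *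
  refine le_antisymm (max_le (by linarith) (by linarith)) ?_
  rcases le_max_iff.1 (h4 y z x u) with h | h
  · exact le_max_of_le_right (by linarith)
  · exact le_max_of_le_left (by linarith)

lemma treeRealizable_option_of_eq_add_dist {d : Option Y → Option Y → ℝ} (hd : IsMetricOn d)
    (W : WeightedTree) (ι : Y → W.V) (hι : ∀ u v, d (some u) (some v) = W.dist (ι u) (ι v))
    (c : W.V) {α : ℝ} (hα : 0 ≤ α) (hc : ∀ u, d none (some u) = α + W.dist c (ι u)) :
    TreeRealizable d := by
  obtain ⟨W', j, x, hj, hx⟩ := W.exists_pendant c hα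
  refine ⟨W', fun o => o.elim x (j ∘ ι), ?_⟩
  rintro (_ | u) (_ | v)
  · exact ((hd.2.1 _ _).2 rfl).trans (W'.dist_self x).symm
  · exact (hc v).trans (hx _).symm
  · exact (hd.2.2.1 _ _).trans <| (hc u).trans <| (hx _).symm.trans (W'.dist_comm _ _)
  · exact (hι u v).trans (hj _ _).symm

lemma treeRealizable_option_of_fourPoint [Finite Y] {d : Option Y → Option Y → ℝ}
    (hd : IsMetricOn d) (h4 : FourPoint d) (hY : TreeRealizable fun u v => d (some u) (some v)) :
    TreeRealizable d := by
  obtain ⟨W, ι, hι⟩ := hY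
  beta_reduce at hι
  cases isEmpty_or_nonempty Y
  · exact treeRealizable_option_of_eq_add_dist hd W ι hι W.isTree.connected.nonempty.some le_rfl
      isEmptyElim
  obtain ⟨⟨y, z⟩, hmin⟩ :=
    Finite.exists_min fun p : Y × Y => gromovProduct d none (some p.1) (some p.2)
  set α := gromovProduct d none (some y) (some z) with hα
  have hcomm := hd.2.2.1
  have htri := hd.2.2.2
  have hα0 : 0 ≤ α := by
    rw [hα, gromovProduct]
    linarith [htri (some y) (some z) none, hcomm (some y) none, hcomm (some z) none]
  have hβ0 : 0 ≤ d none (some y) - α := by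
    rw [hα, gromovProduct]
    linarith [htri none (some z) (some y), hcomm (some z) (some y)]
  have hβ1 : d none (some y) - α ≤ W.dist (ι y) (ι z) := by
    rw [← hι, hα, gromovProduct]
    linarith [htri none (some y) (some z)]
  have hγ : W.dist (ι y) (ι z) - (d none (some y) - α) = d none (some z) - α := by
    rw [← hι, hα, gromovProduct]
    ring
  obtain ⟨W', j, c, hj, hyc, hcz⟩ := W.exists_vertex_between (ι y) (ι z) hβ0 hβ1
  rw [hγ] at hcz
  refine treeRealizable_option_of_eq_add_dist hd W' (j ∘ ι)
    (fun u v => (hι u v).trans (hj _ _).symm) c hα0 fun u => ?_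
  have hseg : W'.dist (j (ι u)) c = max (W'.dist (j (ι u)) (j (ι y)) - W'.dist (j (ι y)) c)
      (W'.dist (j (ι u)) (j (ι z)) - W'.dist c (j (ι z))) :=
    treeDist_eq_max_of_treeDist_add_treeDist W'.isTree W'.weight_pos
      (show W'.dist (j (ι y)) c + W'.dist c (j (ι z)) = W'.dist (j (ι y)) (j (ι z)) by
        rw [hyc, hcz, hj, ← hι, hα, gromovProduct]; ring) _
  rw [hyc, hcz, hj, hj, ← hι, ← hι,
    h4.max_sub_eq_sub_gromovProduct (hmin (u, y)) (hmin (u, z))] at hseg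
  rw [Function.comp_apply, W'.dist_comm, hseg]
  ring

theorem treeRealizable_of_fourPoint [Finite X] {d : X → X → ℝ} (hd : IsMetricOn d)
    (h4 : FourPoint d) : TreeRealizable d := by
  induction X using Finite.induction_empty_option with
  | of_equiv e ih => simpa using (ih (hd.comp e.injective) (h4.comp e)).comp e.symm
  | h_empty => exact treeRealizable_of_isEmpty d
  | h_option ih =>
    exact treeRealizable_option_of_fourPoint hd h4
      (ih (hd.comp (Option.some_injective _)) (h4.comp some))

end realization

/-- A metric `d` on a finite set `X` is a tree metric (realized by path
distances in some finite, positively weighted tree containing `X` among its nodes) if and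
only if the four-point condition holds:
`d(x,y) + d(v,w) ≤ max (d(x,v) + d(y,w)) (d(x,w) + d(y,v))` for all `v w x y ∈ X`. -/
theorem tree_metric_iff_four_point {X : Type} [Fintype X]
    (d : X → X → ℝ) (hd : IsMetricOn d) :
    (∃ (V : Type) (_ : Fintype V) (T : SimpleGraph V) (hT : T.IsTree)
        (w : Sym2 V → ℝ) (ι : X → V),
      Function.Injective ι ∧ (∀ e ∈ T.edgeSet, 0 < w e) ∧
      ∀ x y, d x y = treeDist T hT w (ι x) (ι y)) ↔
    (∀ v w x y : X, d x y + d v w ≤ max (d x v + d y w) (d x w + d y v)) := by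
  constructor
  · rintro ⟨V, _, T, hT, w, ι, -, hw, hι⟩ v w' x y
    simpa only [hι] using treeDist_four_point hT hw (ι v) (ι w') (ι x) (ι y)
  · intro h4
    obtain ⟨W, ι, hι⟩ := treeRealizable_of_fourPoint hd h4
    exact ⟨W.V, W.fintype, W.graph, W.isTree, W.weight, ι,
      fun x y hxy => (hd.2.1 x y).1 (by rw [hι, hxy, W.dist_self]), W.weight_pos, hι⟩
end

section
/- For any two labeled graphs G and H, the label lower bound LLB(G,H) — defined as the minimal cost of a bijection between the vertex sets of G and H (each padded with enough dummy vertices ε), where matching two vertices with equal labels or two dummies costs 0, matching vertices with different labels costs c_vl, and matching a vertex with a dummy costs c_v — is at most the graph edit distance GED(G,H). -/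
open scoped Classical

/-- A labeled graph: finite vertex set (of natural-number names), finite loop-free edge set,
vertex and edge labeling functions. -/
structure LGraph (Lv Le : Type) where
  verts : Finset ℕ
  edges : Finset (Sym2 ℕ)
  vl : ℕ → Lv
  el : Sym2 ℕ → Le

namespace LGraph

variable {Lv Le : Type}

/-- Well-formedness: edges are loop-free and their endpoints are vertices. -/
def WF (G : LGraph Lv Le) : Prop :=
  (∀ e ∈ G.edges, ¬ e.IsDiag) ∧ ∀ e ∈ G.edges, ∀ v ∈ e, v ∈ G.verts

/-- The degree of a vertex: the number of incident edges. -/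
noncomputable def degree (G : LGraph Lv Le) (v : ℕ) : ℕ :=
  (G.edges.filter fun e => v ∈ e).card

/-- Edit operations: insert/delete/relabel a vertex, insert/delete/relabel an edge. -/
inductive Op (Lv Le : Type) where
  | addV (v : ℕ) (l : Lv)
  | delV (v : ℕ)
  | relV (v : ℕ) (l : Lv)
  | addE (u v : ℕ) (l : Le)
  | delE (e : Sym2 ℕ)
  | relE (e : Sym2 ℕ) (l : Le)

/-- Applying an edit operation to a graph; `none` if the operation is invalid
(e.g. deleting a non-isolated vertex). -/
noncomputable def apply (o : Op Lv Le) (G : LGraph Lv Le) : Option (LGraph Lv Le) :=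
  match o with
  | .addV v l => if v ∈ G.verts then none else
      some ⟨insert v G.verts, G.edges, Function.update G.vl v l, G.el⟩
  | .delV v => if v ∈ G.verts ∧ ∀ e ∈ G.edges, v ∉ e then
      some ⟨G.verts.erase v, G.edges, G.vl, G.el⟩ else none
  | .relV v l => if v ∈ G.verts then
      some ⟨G.verts, G.edges, Function.update G.vl v l, G.el⟩ else none
  | .addE u v l => if u ∈ G.verts ∧ v ∈ G.verts ∧ u ≠ v ∧ s(u, v) ∉ G.edges then
      some ⟨G.verts, insert s(u, v) G.edges, G.vl, Function.update G.el s(u, v) l⟩ else none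
  | .delE e => if e ∈ G.edges then
      some ⟨G.verts, G.edges.erase e, G.vl, G.el⟩ else none
  | .relE e l => if e ∈ G.edges then
      some ⟨G.verts, G.edges, G.vl, Function.update G.el e l⟩ else none

/-- Applying a sequence of edit operations (an edit path). -/
noncomputable def applyList : List (Op Lv Le) → LGraph Lv Le → Option (LGraph Lv Le)
  | [], G => some G
  | o :: os, G => (apply o G).bind (applyList os)

/-- Cost of a single edit operation, with vertex insertion/deletion cost `cv`, vertex
relabeling cost `cvl`, edge insertion/deletion cost `ce` and edge relabeling cost `cel`. -/
def opCost (cv cvl ce cel : ℝ) : Op Lv Le → ℝ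
  | .addV _ _ => cv
  | .delV _ => cv
  | .relV _ _ => cvl
  | .addE _ _ _ => ce
  | .delE _ => ce
  | .relE _ _ => cel

/-- Graph isomorphism: a bijection of the vertex sets preserving labels, adjacency and
edge labels. -/
def Iso (G H : LGraph Lv Le) : Prop :=
  ∃ f : ℕ → ℕ, Set.BijOn f ↑G.verts ↑H.verts ∧
    (∀ v ∈ G.verts, H.vl (f v) = G.vl v) ∧
    (∀ u ∈ G.verts, ∀ v ∈ G.verts, (s(u, v) ∈ G.edges ↔ s(f u, f v) ∈ H.edges)) ∧
    (∀ u ∈ G.verts, ∀ v ∈ G.verts, s(u, v) ∈ G.edges → H.el s(f u, f v) = G.el s(u, v))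

/-- The graph edit distance: the infimum of the total cost over all edit paths
transforming `G` into a graph isomorphic to `H`. -/
noncomputable def GED (cv cvl ce cel : ℝ) (G H : LGraph Lv Le) : ℝ :=
  sInf {r | ∃ (ops : List (Op Lv Le)) (H' : LGraph Lv Le),
    applyList ops G = some H' ∧ Iso H' H ∧ r = (ops.map (opCost cv cvl ce cel)).sum}

/-- The vertex set of `G` padded with one dummy vertex (`Sum.inr`) for every vertex
of `H`, so that the padded vertex sets of `G` and `H` have equal cardinality. -/
abbrev PadV (G H : LGraph Lv Le) : Type := {x // x ∈ G.verts} ⊕ {x // x ∈ H.verts}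

/-- Ground cost `c_llb`: 0 for equal labels or two dummies, `cvl` for distinct labels,
`cv` for matching a vertex with a dummy. -/
noncomputable def cllb (cv cvl : ℝ) (G H : LGraph Lv Le) : PadV G H → PadV H G → ℝ
  | .inl u, .inl v => if G.vl u.1 = H.vl v.1 then 0 else cvl
  | .inl _, .inr _ => cv
  | .inr _, .inl _ => cv
  | .inr _, .inr _ => 0

/-- Degree of a padded vertex; dummies have degree 0. -/
noncomputable def padDeg (G H : LGraph Lv Le) : PadV G H → ℕ
  | .inl u => G.degree u.1
  | .inr _ => 0

/-- Ground cost `c_dlb(u,v) = (ce/2)·|δ(u) − δ(v)|`. -/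
noncomputable def cdlb (ce : ℝ) (G H : LGraph Lv Le) (x : PadV G H) (y : PadV H G) : ℝ :=
  ce / 2 * |(padDeg G H x : ℝ) - (padDeg H G y : ℝ)|

/-- Optimal assignment cost between the padded vertex sets of `G` and `H` under a ground
cost `c`: the minimum over all bijections `f` of `∑ x, c x (f x)`. -/
noncomputable def oaCost (G H : LGraph Lv Le) (c : PadV G H → PadV H G → ℝ) : ℝ :=
  sInf {r | ∃ f : PadV G H ≃ PadV H G, r = ∑ x, c x (f x)}

/-- The label lower bound. -/
noncomputable def LLB (cv cvl : ℝ) (G H : LGraph Lv Le) : ℝ :=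
  oaCost G H (cllb cv cvl G H)

/-- The degree lower bound. -/
noncomputable def DLB (ce : ℝ) (G H : LGraph Lv Le) : ℝ :=
  oaCost G H (cdlb ce G H)

/-- The combined lower bound `CLB = LLB + DLB`. -/
noncomputable def CLB (cv cvl ce : ℝ) (G H : LGraph Lv Le) : ℝ :=
  LLB cv cvl G H + DLB ce G H

end LGraph

/-!
A partial matching between the vertex sets of `G` and `H` extends to a bijection of the padded
vertex sets (unmatched vertices go to their own dummies, the remaining dummies to each other)
whose `c_llb`-cost is `cv` per unmatched vertex plus `cvl` per matched pair with distinct labels.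
So it suffices to find, for every edit path from `G` to a copy of `H`, a matching costing no more
than the path.

Build it backwards along the path: the final isomorphism is a perfect matching of cost `0`, and a
matching for the graph after an edit operation gives one for the graph before it that costs at
most the operation more. Undoing a vertex insertion drops the vertex from the matching, leaving at
most its partner unmatched; undoing a deletion adds one unmatched vertex; a relabeling changes at
most one mismatch; edge operations leave the matching alone. Finally, edit paths to a copy of `H`
exist (delete all of `G`, then build `H`), so the infimum defining `GED` is over a nonempty set.
-/

open Finset

theorem Finset.sum_ite_mem_of_subset {ι M : Type*} [DecidableEq ι] [AddCommMonoid M]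
    {s D : Finset ι} (h : D ⊆ s) (g : ι → M) (c : M) :
    ∑ a ∈ s, (if a ∈ D then g a else c) = ∑ a ∈ D, g a + #(s \ D) • c := by
  rw [sum_ite, filter_mem_eq_inter, inter_eq_right.mpr h, filter_notMem_eq_sdiff, sum_const]

namespace PEquiv

variable {α β : Type*}

/-- Matched elements follow `p`; an unmatched element goes to its own copy on the other side. -/
def padFun (p : α ≃. β) : α ⊕ β → β ⊕ α :=
  Sum.elim (fun a => (p a).elim (.inr a) .inl) (fun b => (p.symm b).elim (.inl b) .inr)

theorem padFun_symm_padFun (p : α ≃. β) (x : α ⊕ β) : p.symm.padFun (p.padFun x) = x := by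
  rcases x with a | b
  · cases h : p a with
    | none => simp [padFun, h]
    | some b => simp [padFun, h, p.eq_some_iff.mpr h]
  · cases h : p.symm b with
    | none => simp [padFun, h]
    | some a => simp [padFun, h, p.eq_some_iff.mp h]

def padEquiv (p : α ≃. β) : α ⊕ β ≃ β ⊕ α where
  toFun := p.padFun
  invFun := p.symm.padFun
  left_inv := p.padFun_symm_padFun
  right_inv := p.symm.padFun_symm_padFun

@[simp]
theorem padEquiv_inl (p : α ≃. β) (a : α) : p.padEquiv (.inl a) = (p a).elim (.inr a) .inl := rfl

@[simp]
theorem padEquiv_inr (p : α ≃. β) (b : β) :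
    p.padEquiv (.inr b) = (p.symm b).elim (.inl b) .inr := rfl

end PEquiv

structure PartialMatching {α β : Type*} (s : Finset α) (t : Finset β) where
  dom : Finset α
  toFun : α → β
  dom_subset : dom ⊆ s
  mapsTo : Set.MapsTo toFun dom t
  injOn : Set.InjOn toFun dom

namespace PartialMatching

variable {α β L : Type*} {s s' : Finset α} {t : Finset β}

noncomputable def cost (cv cvl : ℝ) (la : α → L) (lb : β → L) (M : PartialMatching s t) : ℝ :=
  cv * ((#s : ℝ) + #t - 2 * #M.dom) + cvl * #{a ∈ M.dom | la a ≠ lb (M.toFun a)}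

-- The instance argument keeps `image` in line with `instDecidableEqNat` under `open Classical`.
noncomputable def toPEquiv [DecidableEq β] (M : PartialMatching s t) :
    {a // a ∈ s} ≃. {b // b ∈ t} where
  toFun a := if h : a.1 ∈ M.dom then some ⟨M.toFun a, M.mapsTo h⟩ else none
  invFun b := if h : b.1 ∈ M.dom.image M.toFun then
    some ⟨(mem_image.mp h).choose, M.dom_subset (mem_image.mp h).choose_spec.1⟩ else none
  inv a b := by
    constructor
    · intro hab
      split_ifs at hab with h
      obtain ⟨ha, hfa⟩ := (mem_image.mp h).choose_spec
      cases Option.mem_some_iff.mp hab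
      simp only [ha, dif_pos, Option.some.injEq]
      exact Subtype.ext hfa
    · intro hab
      split_ifs at hab with h
      cases Option.mem_some_iff.mp hab
      have hb : M.toFun a ∈ M.dom.image M.toFun := mem_image_of_mem _ h
      obtain ⟨ha', hfa'⟩ := (mem_image.mp hb).choose_spec
      simp only [hb, dif_pos, Option.some.injEq]
      exact Subtype.ext (M.injOn ha' h hfa')

theorem toPEquiv_apply [DecidableEq β] (M : PartialMatching s t) (a : {a // a ∈ s}) :
    M.toPEquiv a = if h : a.1 ∈ M.dom then some ⟨M.toFun a, M.mapsTo h⟩ else none := rfl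

theorem toPEquiv_symm_apply [DecidableEq β] (M : PartialMatching s t) (b : {b // b ∈ t}) :
    M.toPEquiv.symm b = if h : b.1 ∈ M.dom.image M.toFun then
      some ⟨(mem_image.mp h).choose, M.dom_subset (mem_image.mp h).choose_spec.1⟩ else none :=
  rfl

variable {cv cvl : ℝ} {la : α → L} {lb : β → L}

def mono (M : PartialMatching s t) (h : s ⊆ s') : PartialMatching s' t :=
  { M with dom_subset := M.dom_subset.trans h }

theorem cost_mono (M : PartialMatching s t) (h : s ⊆ s') :
    (M.mono h).cost cv cvl la lb = M.cost cv cvl la lb + cv * (#s' - #s) := by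
  rw [cost, cost]
  change cv * ((#s' : ℝ) + #t - 2 * #M.dom) + cvl * #{a ∈ M.dom | la a ≠ lb (M.toFun a)} = _
  ring

def erase [DecidableEq α] {v : α} (M : PartialMatching (insert v s) t) : PartialMatching s t where
  dom := M.dom.erase v
  toFun := M.toFun
  dom_subset _ ha :=
    (mem_insert.mp (M.dom_subset (mem_of_mem_erase ha))).resolve_left (ne_of_mem_erase ha)
  mapsTo := M.mapsTo.mono_left (by simp)
  injOn := M.injOn.mono (by simp)

theorem cost_erase_le [DecidableEq α] (hcv : 0 ≤ cv) (hcvl : 0 ≤ cvl) {v : α} (hv : v ∉ s)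
    (l : L) (M : PartialMatching (insert v s) t) :
    M.erase.cost cv cvl la lb ≤ cv + M.cost cv cvl (Function.update la v l) lb := by
  have hs : (#(insert v s) : ℝ) = #s + 1 := mod_cast card_insert_of_notMem hv
  have hdom : (#M.dom : ℝ) ≤ #M.erase.dom + 1 := by
    have := pred_card_le_card_erase (s := M.dom) (a := v)
    exact_mod_cast (by omega : #M.dom ≤ #(M.dom.erase v) + 1)
  have hmis : (#{a ∈ M.erase.dom | la a ≠ lb (M.erase.toFun a)} : ℝ) ≤
      #{a ∈ M.dom | Function.update la v l a ≠ lb (M.toFun a)} := by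
    refine mod_cast card_le_card fun a ha => ?_
    obtain ⟨ha, hne⟩ := mem_filter.mp ha
    rw [mem_filter, Function.update_of_ne (ne_of_mem_erase ha)]
    exact ⟨mem_of_mem_erase ha, hne⟩
  rw [cost, cost, hs]
  nlinarith [mul_le_mul_of_nonneg_left hdom hcv, mul_le_mul_of_nonneg_left hmis hcvl]

theorem cost_le_add_cost_update [DecidableEq α] (hcvl : 0 ≤ cvl) (v : α) (l : L)
    (M : PartialMatching s t) :
    M.cost cv cvl la lb ≤ cvl + M.cost cv cvl (Function.update la v l) lb := by
  have hmis : (#{a ∈ M.dom | la a ≠ lb (M.toFun a)} : ℝ) ≤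
      #{a ∈ M.dom | Function.update la v l a ≠ lb (M.toFun a)} + 1 := by
    refine mod_cast (card_le_card fun a ha => ?_).trans (card_insert_le v _)
    obtain ⟨ha, hne⟩ := mem_filter.mp ha
    rcases eq_or_ne a v with rfl | hav
    · exact mem_insert_self _ _
    · exact mem_insert_of_mem (mem_filter.mpr ⟨ha, by rwa [Function.update_of_ne hav]⟩)
  rw [cost, cost]
  nlinarith [mul_le_mul_of_nonneg_left hmis hcvl]

def ofBijOn {f : α → β} (h : Set.BijOn f s t) : PartialMatching s t :=
  ⟨s, f, subset_rfl, h.mapsTo, h.injOn⟩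

theorem cost_ofBijOn {f : α → β} (h : Set.BijOn f s t) (hl : ∀ a ∈ s, lb (f a) = la a) :
    (ofBijOn h).cost cv cvl la lb = 0 := by
  rw [cost]
  have hmis : {a ∈ (ofBijOn h).dom | la a ≠ lb ((ofBijOn h).toFun a)} = ∅ :=
    filter_eq_empty_iff.mpr fun a ha => not_not.mpr (hl a ha).symm
  rw [hmis, card_empty]
  change cv * ((#s : ℝ) + #t - 2 * #s) + cvl * ((0 : ℕ) : ℝ) = 0
  rw [h.finsetCard_eq]
  ring

end PartialMatching

namespace LGraph

variable {Lv Le : Type}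

theorem cllb_nonneg {cv cvl : ℝ} (hcv : 0 ≤ cv) (hcvl : 0 ≤ cvl) (G H : LGraph Lv Le)
    (x : PadV G H) (y : PadV H G) : 0 ≤ cllb cv cvl G H x y := by
  rcases x with a | b <;> rcases y with c | d <;> simp only [cllb] <;> (try split_ifs) <;>
    first | assumption | exact le_rfl

theorem oaCost_le_sum {G H : LGraph Lv Le} {c : PadV G H → PadV H G → ℝ}
    (hc : ∀ x y, 0 ≤ c x y) (f : PadV G H ≃ PadV H G) : oaCost G H c ≤ ∑ x, c x (f x) :=
  csInf_le ⟨0, by rintro _ ⟨g, rfl⟩; exact sum_nonneg fun x _ => hc x (g x)⟩ ⟨f, rfl⟩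

theorem sum_cllb_padEquiv (cv cvl : ℝ) (G H : LGraph Lv Le)
    (M : PartialMatching G.verts H.verts) :
    ∑ x, cllb cv cvl G H x (M.toPEquiv.padEquiv x) = M.cost cv cvl G.vl H.vl := by
  have hl : ∀ a : {a // a ∈ G.verts}, cllb cv cvl G H (.inl a) (M.toPEquiv.padEquiv (.inl a)) =
      if a.1 ∈ M.dom then (if G.vl a = H.vl (M.toFun a) then 0 else cvl) else cv := by
    intro a
    by_cases h : a.1 ∈ M.dom <;> simp [h, PartialMatching.toPEquiv_apply, cllb]
  have hr : ∀ b : {b // b ∈ H.verts}, cllb cv cvl G H (.inr b) (M.toPEquiv.padEquiv (.inr b)) =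
      if b.1 ∈ M.dom.image M.toFun then 0 else cv := by
    intro b
    rw [PEquiv.padEquiv_inr, PartialMatching.toPEquiv_symm_apply]
    by_cases h : b.1 ∈ M.dom.image M.toFun
    · rw [dif_pos h, if_pos h]; rfl
    · rw [dif_neg h, if_neg h]; rfl
  have hrange : M.dom.image M.toFun ⊆ H.verts := image_subset_iff.mpr fun a ha => M.mapsTo ha
  have hcard_range : #(M.dom.image M.toFun) = #M.dom := card_image_of_injOn M.injOn
  rw [Fintype.sum_sum_type]
  simp only [hl, hr]
  rw [sum_coe_sort G.verts
      (fun a => if a ∈ M.dom then (if G.vl a = H.vl (M.toFun a) then 0 else cvl) else cv),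
    sum_coe_sort H.verts (fun b => if b ∈ M.dom.image M.toFun then 0 else cv),
    sum_ite_mem_of_subset M.dom_subset, sum_ite_mem_of_subset hrange, sum_ite, sum_const_zero,
    sum_const_zero, sum_const, zero_add, zero_add, PartialMatching.cost]
  have hs := card_sdiff_add_card_eq_card M.dom_subset
  have ht := card_sdiff_add_card_eq_card hrange
  simp only [nsmul_eq_mul]
  rw [← hs, ← ht, hcard_range]
  push_cast
  ring

theorem LLB_le_cost {cv cvl : ℝ} (hcv : 0 ≤ cv) (hcvl : 0 ≤ cvl) (G H : LGraph Lv Le)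
    (M : PartialMatching G.verts H.verts) : LLB cv cvl G H ≤ M.cost cv cvl G.vl H.vl :=
  sum_cllb_padEquiv cv cvl G H M ▸ oaCost_le_sum (cllb_nonneg hcv hcvl G H) _

variable {β : Type*} {t : Finset β} {lb : β → Lv} {cv cvl ce cel : ℝ}

theorem exists_matching_cost_le_of_apply (hcv : 0 ≤ cv) (hcvl : 0 ≤ cvl) (hce : 0 ≤ ce)
    (hcel : 0 ≤ cel) {o : Op Lv Le} {G G₁ : LGraph Lv Le} (h : LGraph.apply o G = some G₁)
    (M₁ : PartialMatching G₁.verts t) :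
    ∃ M : PartialMatching G.verts t,
      M.cost cv cvl G.vl lb ≤ opCost cv cvl ce cel o + M₁.cost cv cvl G₁.vl lb := by
  rcases o with ⟨v, l⟩ | v | ⟨v, l⟩ | _ | _ | _ <;> simp only [LGraph.apply] at h <;>
    split_ifs at h with hv <;> cases h
  · exact ⟨M₁.erase, M₁.cost_erase_le hcv hcvl hv l⟩
  · refine ⟨M₁.mono (erase_subset v G.verts), ?_⟩
    rw [PartialMatching.cost_mono, ← card_erase_add_one hv.1]
    simp only [opCost]
    push_cast
    linarith
  · exact ⟨M₁, M₁.cost_le_add_cost_update hcvl v l⟩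
  · exact ⟨M₁, le_add_of_nonneg_left hce⟩
  · exact ⟨M₁, le_add_of_nonneg_left hce⟩
  · exact ⟨M₁, le_add_of_nonneg_left hcel⟩

theorem exists_matching_cost_le_of_applyList (hcv : 0 ≤ cv) (hcvl : 0 ≤ cvl) (hce : 0 ≤ ce)
    (hcel : 0 ≤ cel) {H : LGraph Lv Le} :
    ∀ {ops : List (Op Lv Le)} {G H' : LGraph Lv Le}, applyList ops G = some H' → Iso H' H →
      ∃ M : PartialMatching G.verts H.verts,
        M.cost cv cvl G.vl H.vl ≤ (ops.map (opCost cv cvl ce cel)).sum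
  | [], G, _, rfl, ⟨_, hf, hl, _⟩ => ⟨.ofBijOn hf, (PartialMatching.cost_ofBijOn hf hl).le⟩
  | o :: ops, G, H', h, hiso => by
    obtain ⟨G₁, h₁, hrest⟩ := Option.bind_eq_some_iff.mp h
    obtain ⟨M₁, hM₁⟩ := exists_matching_cost_le_of_applyList hcv hcvl hce hcel hrest hiso
    obtain ⟨M, hM⟩ := exists_matching_cost_le_of_apply hcv hcvl hce hcel h₁ M₁
    exact ⟨M, by rw [List.map_cons, List.sum_cons]; linarith⟩

theorem applyList_append (ops ops' : List (Op Lv Le)) (G : LGraph Lv Le) :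
    applyList (ops ++ ops') G = (applyList ops G).bind (applyList ops') := by
  induction ops generalizing G with
  | nil => rfl
  | cons o ops ih =>
    simp only [List.cons_append, applyList, ih, Option.bind_assoc]

theorem applyList_append_singleton {ops : List (Op Lv Le)} {G G' : LGraph Lv Le}
    (h : applyList ops G = some G') (o : Op Lv Le) :
    applyList (ops ++ [o]) G = apply o G' := by
  rw [applyList_append, h, Option.bind_some, applyList]
  cases apply o G' <;> rfl

theorem exists_applyList_delete_edges (G : LGraph Lv Le) :
    ∃ ops, applyList ops G = some ⟨G.verts, ∅, G.vl, G.el⟩ := by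
  suffices ∀ E ⊆ G.edges, ∃ ops, applyList ops G = some ⟨G.verts, G.edges \ E, G.vl, G.el⟩ by
    simpa using this G.edges subset_rfl
  intro E
  induction E using Finset.induction_on with
  | empty => exact fun _ => ⟨[], by rw [sdiff_empty]; rfl⟩
  | insert e E he ih =>
    intro hE
    obtain ⟨ops, hops⟩ := ih ((subset_insert e E).trans hE)
    have hmem : e ∈ G.edges \ E := mem_sdiff.mpr ⟨hE (mem_insert_self e E), he⟩
    exact ⟨ops ++ [.delE e], by
      rw [applyList_append_singleton hops, apply, if_pos hmem, sdiff_insert]⟩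

theorem exists_applyList_delete_verts (G : LGraph Lv Le) (hG : G.edges = ∅) :
    ∃ ops, applyList ops G = some ⟨∅, G.edges, G.vl, G.el⟩ := by
  suffices ∀ V ⊆ G.verts, ∃ ops, applyList ops G = some ⟨G.verts \ V, G.edges, G.vl, G.el⟩ by
    simpa using this G.verts subset_rfl
  intro V
  induction V using Finset.induction_on with
  | empty => exact fun _ => ⟨[], by rw [sdiff_empty]; rfl⟩
  | insert v V hv ih =>
    intro hV
    obtain ⟨ops, hops⟩ := ih ((subset_insert v V).trans hV)
    have hmem : v ∈ G.verts \ V := mem_sdiff.mpr ⟨hV (mem_insert_self v V), hv⟩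
    exact ⟨ops ++ [.delV v], by
      rw [applyList_append_singleton hops, apply, if_pos ⟨hmem, by simp [hG]⟩, sdiff_insert]⟩

theorem exists_applyList_insert_verts (G : LGraph Lv Le) (lab : ℕ → Lv) {V : Finset ℕ}
    (hV : Disjoint G.verts V) :
    ∃ ops vl, applyList ops G = some ⟨G.verts ∪ V, G.edges, vl, G.el⟩ ∧
      ∀ v ∈ V, vl v = lab v := by
  induction V using Finset.induction_on with
  | empty => exact ⟨[], G.vl, by rw [union_empty]; rfl, by simp⟩
  | insert v V hv ih =>
    obtain ⟨ops, vl, hops, hvl⟩ := ih (disjoint_of_subset_right (subset_insert v V) hV)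
    have hnot : v ∉ G.verts ∪ V :=
      notMem_union.mpr ⟨disjoint_right.mp hV (mem_insert_self v V), hv⟩
    refine ⟨ops ++ [.addV v (lab v)], Function.update vl v (lab v), ?_, ?_⟩
    · rw [applyList_append_singleton hops, apply, if_neg hnot, union_insert]
    · intro w hw
      rcases mem_insert.mp hw with rfl | hw
      · exact Function.update_self ..
      · rw [Function.update_of_ne (ne_of_mem_of_not_mem hw hv), hvl w hw]

theorem exists_applyList_insert_edges (G : LGraph Lv Le) (lab : Sym2 ℕ → Le)
    {E : Finset (Sym2 ℕ)} (hE : ∀ e ∈ E, ¬e.IsDiag ∧ ∀ v ∈ e, v ∈ G.verts)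
    (hdisj : Disjoint G.edges E) :
    ∃ ops el, applyList ops G = some ⟨G.verts, G.edges ∪ E, G.vl, el⟩ ∧
      ∀ e ∈ E, el e = lab e := by
  induction E using Finset.induction_on with
  | empty => exact ⟨[], G.el, by rw [union_empty]; rfl, by simp⟩
  | insert e E he ih =>
    obtain ⟨ops, el, hops, hel⟩ := ih (fun e' he' => hE e' (mem_insert_of_mem he'))
      (disjoint_of_subset_right (subset_insert e E) hdisj)
    obtain ⟨hdiag, hends⟩ := hE e (mem_insert_self e E)
    have hnot : e ∉ G.edges ∪ E :=
      notMem_union.mpr ⟨disjoint_right.mp hdisj (mem_insert_self e E), he⟩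
    induction e using Sym2.ind with
    | h u v =>
      refine ⟨ops ++ [.addE u v (lab s(u, v))], Function.update el s(u, v) (lab s(u, v)), ?_, ?_⟩
      · rw [applyList_append_singleton hops, apply, if_pos ⟨hends u (Sym2.mem_mk_left u v),
          hends v (Sym2.mem_mk_right u v), fun h => hdiag (Sym2.mk_isDiag_iff.mpr h), hnot⟩,
          union_insert]
      · intro e' he'
        rcases mem_insert.mp he' with rfl | he'
        · exact Function.update_self ..
        · rw [Function.update_of_ne (ne_of_mem_of_not_mem he' he), hel e' he']

theorem exists_applyList_iso (G : LGraph Lv Le) {H : LGraph Lv Le} (hH : H.WF) :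
    ∃ ops H', applyList ops G = some H' ∧ Iso H' H := by
  obtain ⟨ops₁, h₁⟩ := exists_applyList_delete_edges G
  obtain ⟨ops₂, h₂⟩ := exists_applyList_delete_verts ⟨G.verts, ∅, G.vl, G.el⟩ rfl
  obtain ⟨ops₃, vl, h₃, hvl⟩ :=
    exists_applyList_insert_verts ⟨∅, ∅, G.vl, G.el⟩ H.vl (V := H.verts) (disjoint_empty_left _)
  obtain ⟨ops₄, el, h₄, hel⟩ := exists_applyList_insert_edges ⟨∅ ∪ H.verts, ∅, vl, G.el⟩ H.el
    (E := H.edges) (fun e he => ⟨hH.1 e he, fun v hv => by simpa using hH.2 e he v hv⟩)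
    (disjoint_empty_left _)
  dsimp only at h₂ h₃ h₄
  refine ⟨ops₁ ++ ops₂ ++ ops₃ ++ ops₄, ⟨∅ ∪ H.verts, ∅ ∪ H.edges, vl, el⟩, ?_, id, ?_, ?_, ?_, ?_⟩
  · simp only [applyList_append, h₁, h₂, h₃, h₄, Option.bind_some]
  · simpa using Set.bijOn_id (H.verts : Set ℕ)
  · intro v hv
    exact (hvl v (by simpa using hv)).symm
  · simp
  · intro u _ v _ huv
    exact (hel _ (by simpa using huv)).symm

end LGraph

open LGraph in
theorem llb_le_ged_general {Lv Le : Type} (cv cvl ce cel : ℝ)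
    (hcv : 0 ≤ cv) (hcvl : 0 ≤ cvl) (hce : 0 ≤ ce) (hcel : 0 ≤ cel)
    (G H : LGraph Lv Le) (hH : H.WF) :
    LLB cv cvl G H ≤ GED cv cvl ce cel G H := by
  obtain ⟨ops, H', h, hiso⟩ := exists_applyList_iso G hH
  refine le_csInf ⟨_, ops, H', h, hiso, rfl⟩ ?_
  rintro _ ⟨ops, H', h, hiso, rfl⟩
  obtain ⟨M, hM⟩ := exists_matching_cost_le_of_applyList hcv hcvl hce hcel h hiso
  exact (LLB_le_cost hcv hcvl G H M).trans hM

open LGraph in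
/-- For any two labeled graphs `G` and `H`, the label lower bound `LLB(G,H)` —
the minimal cost of a bijection between the dummy-padded vertex sets under the ground cost
`c_llb` — is at most the graph edit distance `GED(G,H)`. -/
theorem llb_le_ged {Lv Le : Type} (cv cvl ce cel : ℝ)
    (hcv : 0 ≤ cv) (hcvl : 0 ≤ cvl) (hce : 0 ≤ ce) (hcel : 0 ≤ cel)
    (G H : LGraph Lv Le) (hG : G.WF) (hH : H.WF) :
    LLB cv cvl G H ≤ GED cv cvl ce cel G H :=
  llb_le_ged_general cv cvl ce cel hcv hcvl hce hcel G H hH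
end
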